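/- arXiv:math/0401223 — 6 statements merged into one kernel-verified Lean document; each statement's English description precedes it below -/
import Mathlib

section
/- If $a$ and $b$ are coprime positive integers and $\sigma > 0$, then $L(ab;\sigma) \le L(a;\sigma + \log b)$. -/
noncomputable def L (a : ℕ) (σ : ℝ) : ℝ :=
  (MeasureTheory.volume
    {x : ℝ | ∃ d : ℕ, d ∣ a ∧ Real.exp x < (d : ℝ) ∧ (d : ℝ) ≤ Real.exp (x + σ)}).toReal

/-!
Every divisor of `a * b` factors as `d₁ * d₂` with `d₁ ∣ a` and `1 ≤ d₂ ≤ b`. If `d₁ * d₂` lies in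
`(e^x, e^(x + σ)]`, then `d₁` lies in `(e^x / b, e^(x + σ)]`, i.e. `x - log b ∈ 𝓛(a; σ + log b)`.
So `𝓛(ab; σ)` is contained in a translate of `𝓛(a; σ + log b)`, a bounded set, and Lebesgue
measure is translation invariant.
-/

open MeasureTheory Real Set

/-- The set `𝓛(a; σ)`. -/
def divisorWindow (a : ℕ) (σ : ℝ) : Set ℝ :=
  {x : ℝ | ∃ d : ℕ, d ∣ a ∧ exp x < d ∧ (d : ℝ) ≤ exp (x + σ)}

lemma L_eq_toReal_volume (a : ℕ) (σ : ℝ) : L a σ = (volume (divisorWindow a σ)).toReal := rfl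

lemma divisorWindow_subset_Icc {a : ℕ} (ha : 0 < a) (σ : ℝ) :
    divisorWindow a σ ⊆ Icc (-σ) (log a) := by
  rintro x ⟨d, hd, hlt, hle⟩
  have hd_pos : (1 : ℝ) ≤ d := by exact_mod_cast Nat.pos_of_dvd_of_pos hd ha
  have hd_le : (d : ℝ) ≤ a := by exact_mod_cast Nat.le_of_dvd ha hd
  constructor
  · have : exp 0 ≤ exp (x + σ) := by rw [exp_zero]; linarith
    linarith [exp_le_exp.mp this]
  · exact ((lt_log_iff_exp_lt (by positivity)).mpr (hlt.trans_le hd_le)).le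

lemma volume_divisorWindow_ne_top {a : ℕ} (ha : 0 < a) (σ : ℝ) :
    volume (divisorWindow a σ) ≠ ⊤ :=
  ne_top_of_le_ne_top (by simp [volume_Icc]) (measure_mono (divisorWindow_subset_Icc ha σ))

lemma divisorWindow_mul_subset_preimage (a : ℕ) {b : ℕ} (hb : 0 < b) (σ : ℝ) :
    divisorWindow (a * b) σ ⊆ (· + -log b) ⁻¹' divisorWindow a (σ + log b) := by
  rintro x ⟨_, hd, hlt, hle⟩
  obtain ⟨d₁, d₂, hd₁, hd₂, rfl⟩ := exists_dvd_and_dvd_of_dvd_mul hd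
  have hb_pos : (0 : ℝ) < b := by exact_mod_cast hb
  have hd₂_ge : (1 : ℝ) ≤ d₂ := by exact_mod_cast Nat.pos_of_dvd_of_pos hd₂ hb
  have hd₂_le : (d₂ : ℝ) ≤ b := by exact_mod_cast Nat.le_of_dvd hb hd₂
  push_cast at hlt hle
  refine ⟨d₁, hd₁, ?_, ?_⟩
  · rw [exp_add, exp_neg, exp_log hb_pos, ← div_eq_mul_inv, div_lt_iff₀ hb_pos]
    calc exp x < d₁ * d₂ := hlt
      _ ≤ d₁ * b := by gcongr
  · calc (d₁ : ℝ) ≤ d₁ * d₂ := le_mul_of_one_le_right (Nat.cast_nonneg _) hd₂_ge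
      _ ≤ exp (x + σ) := hle
      _ = exp (x + -log b + (σ + log b)) := by congr 1; ring

theorem stmt4_general (a b : ℕ) (ha : 0 < a) (hb : 0 < b)
    (σ : ℝ) :
    L (a * b) σ ≤ L a (σ + Real.log b) := by
  rw [L_eq_toReal_volume, L_eq_toReal_volume]
  refine ENNReal.toReal_mono (volume_divisorWindow_ne_top ha _) ?_
  calc volume (divisorWindow (a * b) σ)
      ≤ volume ((· + -log b) ⁻¹' divisorWindow a (σ + log b)) :=
        measure_mono (divisorWindow_mul_subset_preimage a hb σ)
    _ = volume (divisorWindow a (σ + log b)) := measure_preimage_add_right _ _ _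

theorem stmt4 (a b : ℕ) (ha : 0 < a) (hb : 0 < b) (hab : Nat.Coprime a b)
    (σ : ℝ) (hσ : 0 < σ) :
    L (a * b) σ ≤ L a (σ + Real.log b) :=
  stmt4_general a b ha hb σ
end

section
/- For every positive integer $a$ and $\sigma > 0$: $W(a;\sigma) \ge 2\tau(a) - I(a;\sigma)$, and consequently for every integer $r \ge 1$, $I(a;\sigma)^r \ge 2^{-r} \tau(a)^{r-1}(3\tau(a) - 2W(a;\sigma))$. -/
open scoped Classical

/-- Number of σ-isolated divisors of `a`: divisors `d` such that `a` has exactly one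
divisor in `(d e^{-σ}, d e^{σ}]` (namely `d` itself). -/
noncomputable def Iso (a : ℕ) (σ : ℝ) : ℕ :=
  (a.divisors.filter (fun d =>
    (a.divisors.filter (fun e =>
      (d : ℝ) * Real.exp (-σ) < (e : ℝ) ∧ (e : ℝ) ≤ (d : ℝ) * Real.exp σ)).card = 1)).card

/-- Number of ordered pairs of divisors `(d₁,d₂)` of `a` with `|log(d₁/d₂)| ≤ σ`. -/
noncomputable def W (a : ℕ) (σ : ℝ) : ℕ :=
  ((a.divisors ×ˢ a.divisors).filter
    (fun q => |Real.log ((q.1 : ℝ) / (q.2 : ℝ))| ≤ σ)).card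


lemma Iso_eq (a : ℕ) (σ : ℝ) :
    Iso a σ = (a.divisors.filter (fun d : ℕ =>
      (a.divisors.filter (fun e : ℕ =>
        (d : ℝ) * Real.exp (-σ) < (e : ℝ) ∧ (e : ℝ) ≤ (d : ℝ) * Real.exp σ)).card = 1)).card := by
  have hbind : (a.divisors >>= fun d : ℕ => (pure ((d : ℕ) : ℝ) : Finset ℝ))
      = a.divisors.image (fun n : ℕ => (n : ℝ)) := by
    ext x; simp [eq_comm]
  unfold Iso
  rw [hbind, Finset.filter_image, Finset.card_image_of_injective _ Nat.cast_injective]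
  congr 1
  apply Finset.filter_congr
  intro d _
  rw [Finset.filter_image, Finset.card_image_of_injective _ Nat.cast_injective]

lemma key_nat (a : ℕ) (ha : 0 < a) (σ : ℝ) (hσ : 0 < σ) :
    2 * a.divisors.card ≤ W a σ + Iso a σ := by
  set E : ℕ → Finset ℕ := fun d => a.divisors.filter (fun e =>
      (d : ℝ) * Real.exp (-σ) < (e : ℝ) ∧ (e : ℝ) ≤ (d : ℝ) * Real.exp σ) with hE
  have hWsum : ∑ d ∈ a.divisors, (E d).card ≤ W a σ := by
    rw [W, Finset.card_eq_sum_card_fiberwise (f := Prod.fst) (t := a.divisors)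
      (by intro q hq
          simp only [Finset.mem_coe, Finset.mem_filter, Finset.mem_product] at hq
          exact hq.1.1)]
    apply Finset.sum_le_sum
    intro d hd
    apply Finset.card_le_card_of_injOn (fun e => (d, e))
    · intro e he
      simp only [hE, Finset.mem_coe, Finset.mem_filter] at he
      have hd0 : 0 < d := Nat.pos_of_mem_divisors hd
      have he0 : 0 < e := Nat.pos_of_mem_divisors he.1
      have hdr : (0:ℝ) < (d:ℝ) := by exact_mod_cast hd0
      have her : (0:ℝ) < (e:ℝ) := by exact_mod_cast he0
      simp only [Finset.mem_coe, Finset.mem_filter, Finset.mem_product]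
      refine ⟨⟨⟨hd, he.1⟩, ?_⟩, trivial⟩
      rw [abs_le, Real.log_div hdr.ne' her.ne']
      have h1 : Real.log (e:ℝ) ≤ Real.log ((d:ℝ) * Real.exp σ) :=
        Real.log_le_log her he.2.2
      have h2 : Real.log ((d:ℝ) * Real.exp (-σ)) < Real.log (e:ℝ) :=
        Real.log_lt_log (by positivity) he.2.1
      rw [Real.log_mul hdr.ne' (Real.exp_ne_zero σ), Real.log_exp] at h1
      rw [Real.log_mul hdr.ne' (Real.exp_ne_zero (-σ)), Real.log_exp] at h2
      constructor <;> linarith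
    · intro x hx y hy hxy
      simpa using congrArg Prod.snd hxy
  have hpoint : ∀ d ∈ a.divisors,
      2 ≤ (E d).card + (if (E d).card = 1 then 1 else 0) := by
    intro d hd
    have hd0 : 0 < d := Nat.pos_of_mem_divisors hd
    have hdr : (0:ℝ) < (d:ℝ) := by exact_mod_cast hd0
    have hmem : d ∈ E d := by
      simp only [hE, Finset.mem_filter]
      refine ⟨hd, ?_, ?_⟩
      · have h1 : Real.exp (-σ) < 1 := Real.exp_lt_one_iff.mpr (by linarith)
        nlinarith
      · have h1 : (1:ℝ) ≤ Real.exp σ := Real.one_le_exp hσ.le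
        nlinarith
    have h1 : 1 ≤ (E d).card := Finset.card_pos.mpr ⟨d, hmem⟩
    by_cases h : (E d).card = 1
    · simp [h]
    · have : 2 ≤ (E d).card := by omega
      simp only [h, if_false]
      omega
  have hsum : 2 * a.divisors.card ≤
      ∑ d ∈ a.divisors, ((E d).card + if (E d).card = 1 then 1 else 0) := by
    calc 2 * a.divisors.card = ∑ _d ∈ a.divisors, 2 := by
          simp [Finset.sum_const, mul_comm]
      _ ≤ _ := Finset.sum_le_sum hpoint
  rw [Finset.sum_add_distrib] at hsum
  have hIso : ∑ d ∈ a.divisors, (if (E d).card = 1 then 1 else 0) = Iso a σ := by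
    have h : Iso a σ = (a.divisors.filter (fun d => (E d).card = 1)).card := by
      rw [Iso_eq, hE]
    rw [h, Finset.card_filter]
  omega

theorem stmt7 (a : ℕ) (ha : 0 < a) (σ : ℝ) (hσ : 0 < σ) (r : ℕ) (hr : 1 ≤ r) :
    2 * (a.divisors.card : ℝ) - (Iso a σ : ℝ) ≤ (W a σ : ℝ) ∧
    ((2 : ℝ) ^ r)⁻¹ * (a.divisors.card : ℝ) ^ (r - 1) *
        (3 * (a.divisors.card : ℝ) - 2 * (W a σ : ℝ)) ≤ (Iso a σ : ℝ) ^ r := by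
  have hkey := key_nat a ha σ hσ
  set τ : ℝ := (a.divisors.card : ℝ) with hτ
  set I : ℝ := (Iso a σ : ℝ) with hI
  set Wr : ℝ := (W a σ : ℝ) with hWr
  have h1 : 2 * τ - I ≤ Wr := by
    have : (2 * a.divisors.card : ℝ) ≤ (W a σ : ℝ) + (Iso a σ : ℝ) := by
      exact_mod_cast hkey
    push_cast at this ⊢
    linarith
  refine ⟨h1, ?_⟩
  have hIle : I ≤ τ := by
    have : Iso a σ ≤ a.divisors.card := by
      rw [Iso_eq]; apply Finset.card_filter_le
    rw [hI, hτ]; exact_mod_cast this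
  have hI0 : 0 ≤ I := by positivity
  have hτ0 : 0 ≤ τ := by positivity
  obtain ⟨s, rfl⟩ : ∃ s, r = s + 1 := ⟨r - 1, by omega⟩
  have hsub : (s + 1) - 1 = s := by omega
  rw [hsub]
  have hWI : 3 * τ - 2 * Wr ≤ 2 * I - τ := by linarith
  by_cases hc : 2 * I ≤ τ
  · have hneg : 3 * τ - 2 * Wr ≤ 0 := by linarith
    have : ((2:ℝ) ^ (s+1))⁻¹ * τ ^ s * (3 * τ - 2 * Wr) ≤ 0 :=
      mul_nonpos_of_nonneg_of_nonpos (by positivity) hneg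
    have hIp : (0:ℝ) ≤ I ^ (s+1) := by positivity
    linarith
  · push_neg at hc
    have hτ2I : τ ≤ 2 * I := hc.le
    have hpow : τ ^ s ≤ (2 * I) ^ s := pow_le_pow_left₀ hτ0 hτ2I s
    have h2I : (2 * I) ^ s = 2 ^ s * I ^ s := mul_pow 2 I s
    have hstep : ((2:ℝ) ^ (s+1))⁻¹ * τ ^ s * (3 * τ - 2 * Wr)
        ≤ ((2:ℝ) ^ (s+1))⁻¹ * τ ^ s * I := by
      have hf : (0:ℝ) ≤ ((2:ℝ) ^ (s+1))⁻¹ * τ ^ s := by positivity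
      have : 3 * τ - 2 * Wr ≤ I := by linarith
      exact mul_le_mul_of_nonneg_left this hf |>.trans_eq (by ring) |>.trans_eq' (by ring)
    have hstep2 : ((2:ℝ) ^ (s+1))⁻¹ * τ ^ s * I
        ≤ ((2:ℝ) ^ (s+1))⁻¹ * (2 ^ s * I ^ s) * I := by
      have hf : (0:ℝ) ≤ ((2:ℝ) ^ (s+1))⁻¹ := by positivity
      rw [← h2I]
      exact mul_le_mul_of_nonneg_right (mul_le_mul_of_nonneg_left hpow hf) hI0
    have hfinal : ((2:ℝ) ^ (s+1))⁻¹ * (2 ^ s * I ^ s) * I ≤ I ^ (s+1) := by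
      have h2 : ((2:ℝ) ^ (s+1))⁻¹ * 2 ^ s = 2⁻¹ := by
        rw [pow_succ]
        field_simp
      calc ((2:ℝ) ^ (s+1))⁻¹ * (2 ^ s * I ^ s) * I
          = (((2:ℝ) ^ (s+1))⁻¹ * 2 ^ s) * I ^ (s+1) := by ring
        _ = 2⁻¹ * I ^ (s+1) := by rw [h2]
        _ ≤ I ^ (s+1) := by
            have : (0:ℝ) ≤ I ^ (s+1) := by positivity
            linarith
    linarith
end

section
/- Let $n$ have prime factorization $n = p_1^{e_1} \cdots p_f^{e_f}$ with $p_1 < \cdots < p_f$. Let $N = \tau(n)$, let $1 \le \ell \le N-1$, and define $v$ to be the unique index such that $(e_1+1)\cdots(e_{v-1}+1)$ divides $\ell$ but $(e_1+1)\cdots(e_v+1)$ does not divide $\ell$. Then $d_{\ell+1}(n)/d_\ell(n) \le p_v$, where $d_j(n)$ denotes the $j$-th smallest divisor of $n$. -/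
section helpers

variable {f : ℕ} {p e : Fin f → ℕ}

lemma fact_eval (hp : ∀ i, (p i).Prime) (hinj : Function.Injective p)
    (b : Fin f → ℕ) (j : Fin f) :
    (∏ i, p i ^ b i).factorization (p j) = b j := by
  rw [Nat.factorization_prod (fun i _ => pow_ne_zero _ (hp i).ne_zero)]
  rw [Finset.sum_apply']
  have h1 : ∀ i : Fin f, ((p i ^ b i).factorization) (p j)
      = if i = j then b i else 0 := by
    intro i
    rw [(hp i).factorization_pow, Finsupp.single_apply]
    simp [hinj.eq_iff]
  rw [Finset.sum_congr rfl fun i _ => h1 i]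
  simp

lemma repr_lemma (hp : ∀ i, (p i).Prime) (hinj : Function.Injective p)
    {n d : ℕ} (hn : n = ∏ i, p i ^ e i) (hn0 : n ≠ 0) (hd : d ∣ n) :
    d = ∏ i, p i ^ (d.factorization (p i)) ∧ ∀ i, d.factorization (p i) ≤ e i := by
  have hd0 : d ≠ 0 := ne_zero_of_dvd_ne_zero hn0 hd
  constructor
  · have hsub : d.factorization.support ⊆ Finset.univ.image p := by
      intro q hq
      rw [Nat.support_factorization] at hq
      obtain ⟨hq1, hq2, _⟩ := Nat.mem_primeFactors.mp hq
      have hqn : q ∣ n := hq2.trans hd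
      rw [hn] at hqn
      obtain ⟨i, _, hqi⟩ := (Nat.Prime.prime hq1).exists_mem_finset_dvd hqn
      have : q = p i := (Nat.prime_dvd_prime_iff_eq hq1 (hp i)).mp
        (hq1.dvd_of_dvd_pow hqi)
      exact Finset.mem_image.mpr ⟨i, Finset.mem_univ i, this.symm⟩
    calc d = d.factorization.prod (· ^ ·) := (Nat.factorization_prod_pow_eq_self hd0).symm
    _ = ∏ q ∈ Finset.univ.image p, q ^ d.factorization q :=
        Finsupp.prod_of_support_subset _ hsub _ (by simp)
    _ = ∏ i, p i ^ d.factorization (p i) := Finset.prod_image (fun i _ j _ h => hinj h)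
  · intro i
    have hle := (Nat.factorization_le_iff_dvd hd0 hn0).mpr hd
    have h2 := hle (p i)
    rwa [hn, fact_eval hp hinj e i] at h2

end helpers

lemma sorted_card_le_get {s : Finset ℕ} {k : ℕ} (hk : k < (s.sort (· ≤ ·)).length) :
    (s.filter (· ≤ (s.sort (· ≤ ·)).get ⟨k, hk⟩)).card = k + 1 := by
  have hsm : StrictMono (s.sort (· ≤ ·)).get := (s.sortedLT_sort).strictMono_get
  apply Finset.card_eq_of_bijective (fun i hi => (s.sort (· ≤ ·)).get ⟨i, by omega⟩)
  · intro a ha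
    rw [Finset.mem_filter] at ha
    obtain ⟨ha1, ha2⟩ := ha
    obtain ⟨i, hi⟩ := List.mem_iff_get.mp ((Finset.mem_sort (α := ℕ) (· ≤ ·)).mpr ha1)
    refine ⟨(i : ℕ), ?_, by rw [← hi]⟩
    by_contra h
    push_neg at h
    have hlt : (⟨k, hk⟩ : Fin (s.sort (· ≤ ·)).length) < i := by
      rw [Fin.lt_def]; simpa using by omega
    have h2 := hsm hlt
    rw [hi] at h2
    omega
  · intro i hi
    rw [Finset.mem_filter]
    refine ⟨(Finset.mem_sort (α := ℕ) (· ≤ ·)).mp (List.get_mem _ _), ?_⟩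
    apply hsm.monotone
    rw [Fin.le_def]; simpa using by omega
  · intro i j hi hj hij
    have := hsm.injective hij
    simpa using congrArg Fin.val this

lemma sorted_ge_of_gt {s : Finset ℕ} {k : ℕ} (hk : k < (s.sort (· ≤ ·)).length)
    (hk1 : k + 1 < (s.sort (· ≤ ·)).length) {d : ℕ} (hd : d ∈ s)
    (hgt : (s.sort (· ≤ ·)).get ⟨k, hk⟩ < d) :
    (s.sort (· ≤ ·)).get ⟨k + 1, hk1⟩ ≤ d := by
  have hsm : StrictMono (s.sort (· ≤ ·)).get := (s.sortedLT_sort).strictMono_get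
  obtain ⟨i, hi⟩ := List.mem_iff_get.mp ((Finset.mem_sort (α := ℕ) (· ≤ ·)).mpr hd)
  have h1 : (⟨k, hk⟩ : Fin (s.sort (· ≤ ·)).length) < i := by
    apply hsm.lt_iff_lt.mp; rw [hi]; exact hgt
  have h2 : (⟨k + 1, hk1⟩ : Fin (s.sort (· ≤ ·)).length) ≤ i := by
    rw [Fin.le_def]; rw [Fin.lt_def] at h1; simp only [Fin.val_mk] at h1 ⊢; omega
  calc (s.sort (· ≤ ·)).get ⟨k + 1, hk1⟩ ≤ (s.sort (· ≤ ·)).get i := hsm.monotone h2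
  _ = d := hi

lemma core_lemma (f : ℕ) (p e : Fin f → ℕ) (hp : ∀ i, (p i).Prime)
    (hmono : StrictMono p) (hinj : Function.Injective p)
    (n : ℕ) (hn : n = ∏ i, p i ^ e i) (hn0 : n ≠ 0)
    (v : ℕ) (hv1 : 1 ≤ v) (hv2 : v ≤ f)
    (x y : ℕ) (hxpos : 0 < x)
    (hcon : p ⟨v - 1, by omega⟩ * x < y)
    (hbig : ∀ d ∈ n.divisors, x < d → y ≤ d)
    (hrepr : ∀ d, d ∣ n →
      d = ∏ i, p i ^ (d.factorization (p i)) ∧ ∀ i, d.factorization (p i) ≤ e i) :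
    (∏ i : Fin f, if (i : ℕ) < v then e i + 1 else 1) ∣
      (n.divisors.filter (· ≤ x)).card := by
  classical
  set pv := p ⟨v - 1, by omega⟩ with hpv
  set high := fun d : ℕ => ∏ i : Fin f, if (i : ℕ) < v then 1 else p i ^ d.factorization (p i)
    with hhigh
  have hhigh_pow : ∀ d : ℕ,
      high d = ∏ i, p i ^ (if (i : ℕ) < v then 0 else d.factorization (p i)) := by
    intro d
    show ∏ i : Fin f, (if (i : ℕ) < v then 1 else p i ^ d.factorization (p i)) = _
    apply Finset.prod_congr rfl
    intro i _
    by_cases hiv : (i : ℕ) < v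
    · simp [hiv]
    · simp [hiv]
  have hhighpos : ∀ d, 0 < high d := by
    intro d
    apply Finset.prod_pos
    intro i _
    split_ifs
    · norm_num
    · exact pow_pos (hp i).pos _
  have hhigh_dvd : ∀ d, d ∣ n → high d ∣ d := by
    intro d hd
    conv_rhs => rw [(hrepr d hd).1]
    apply Finset.prod_dvd_prod_of_dvd
    intro i _
    split_ifs
    · exact one_dvd _
    · exact dvd_rfl
  set S := n.divisors.filter (· ≤ x) with hS
  rw [Finset.card_eq_sum_card_fiberwise
    (fun d hd => Finset.mem_image_of_mem high hd : ∀ d ∈ S, high d ∈ S.image high)]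
  apply Finset.dvd_sum
  intro t ht
  obtain ⟨d0, hd0S, hd0t⟩ := Finset.mem_image.mp ht
  rw [hS, Finset.mem_filter] at hd0S
  obtain ⟨hd0div, hd0x⟩ := hd0S
  have hd0dvd : d0 ∣ n := Nat.dvd_of_mem_divisors hd0div
  have htpos : 0 < t := hd0t ▸ hhighpos d0
  have htx : t ≤ x :=
    le_trans (Nat.le_of_dvd (Nat.pos_of_mem_divisors hd0div) (hd0t ▸ hhigh_dvd d0 hd0dvd)) hd0x
  -- Step A: every member of the full fiber is ≤ x
  have hall : ∀ d, d ∣ n → high d = t → d ≤ x := by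
    by_contra hex
    push_neg at hex
    obtain ⟨d1, hd1, hd1t, hd1x⟩ := hex
    set B := n.divisors.filter (fun d => high d = t ∧ x < d) with hB
    have hBne : B.Nonempty :=
      ⟨d1, by rw [hB, Finset.mem_filter]; exact ⟨Nat.mem_divisors.mpr ⟨hd1, hn0⟩, hd1t, hd1x⟩⟩
    have hcB := B.min'_mem hBne
    set c := B.min' hBne with hc
    rw [hB, Finset.mem_filter] at hcB
    obtain ⟨hcdiv, hct, hcx⟩ := hcB
    have hcdvd : c ∣ n := Nat.dvd_of_mem_divisors hcdiv
    have hc0 : c ≠ 0 := by have := Nat.pos_of_mem_divisors hcdiv; omega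
    by_cases hz : ∀ j : Fin f, (j : ℕ) < v → c.factorization (p j) = 0
    · have hceq : c = high c := by
        conv_lhs => rw [(hrepr c hcdvd).1]
        show _ = ∏ i : Fin f, (if (i : ℕ) < v then 1 else p i ^ c.factorization (p i))
        apply Finset.prod_congr rfl
        intro i _
        by_cases hiv : (i : ℕ) < v
        · rw [hz i hiv]; simp [hiv]
        · simp [hiv]
      rw [hct] at hceq
      omega
    · push_neg at hz
      obtain ⟨j, hjv, hj0⟩ := hz
      have hpj : p j ∣ c := (Nat.Prime.dvd_iff_one_le_factorization (hp j) hc0).mpr (by omega)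
      set c' := c / p j with hc'def
      have hcc' : c = p j * c' := (Nat.mul_div_cancel' hpj).symm
      have hc'dvd : c' ∣ n := (Nat.div_dvd_of_dvd hpj).trans hcdvd
      have hc'0 : c' ≠ 0 := by
        intro h; rw [h, mul_zero] at hcc'; exact hc0 hcc'
      have hfact : ∀ i : Fin f, ¬ (i : ℕ) < v →
          c'.factorization (p i) = c.factorization (p i) := by
        intro i hiv
        conv_rhs => rw [hcc']
        rw [Nat.factorization_mul (hp j).ne_zero hc'0, Finsupp.add_apply,
          (hp j).factorization, Finsupp.single_apply]
        have hne : p j ≠ p i := by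
          intro h
          have h2 : (j : ℕ) = (i : ℕ) := congrArg Fin.val (hinj h)
          omega
        rw [if_neg hne, zero_add]
      have hc't : high c' = t := by
        rw [← hct]
        show ∏ i : Fin f, (if (i : ℕ) < v then 1 else p i ^ c'.factorization (p i)) =
          ∏ i : Fin f, (if (i : ℕ) < v then 1 else p i ^ c.factorization (p i))
        apply Finset.prod_congr rfl
        intro i _
        by_cases hiv : (i : ℕ) < v
        · simp [hiv]
        · simp only [if_neg hiv, hfact i hiv]
      have hc'x : c' ≤ x := by
        by_contra h
        push_neg at h
        have hc'B : c' ∈ B := by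
          rw [hB, Finset.mem_filter]
          exact ⟨Nat.mem_divisors.mpr ⟨hc'dvd, hn0⟩, hc't, h⟩
        have h1 := B.min'_le _ hc'B
        have h2 : c' < c := by
          rw [hcc']
          have h3 := (hp j).two_le
          have h4 := Nat.pos_of_ne_zero hc'0
          nlinarith
        omega
      have hpjle : p j ≤ pv := by
        rw [hpv]
        apply hmono.monotone
        rw [Fin.le_def]
        simp only [Fin.val_mk]
        omega
      have h1 : c ≤ pv * x := by
        rw [hcc']; exact Nat.mul_le_mul hpjle hc'x
      have h2 : y ≤ c := hbig c hcdiv hcx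
      omega
  -- fiber = full fiber
  have hfib : S.filter (fun d => high d = t) = n.divisors.filter (fun d => high d = t) := by
    rw [hS, Finset.filter_filter]
    apply Finset.filter_congr
    intro d hd
    exact ⟨fun h => h.2, fun h => ⟨hall d (Nat.dvd_of_mem_divisors hd) h, h⟩⟩
  rw [hfib]
  -- Step B: full fiber has cardinality L
  have hc0e : ∀ i, d0.factorization (p i) ≤ e i := (hrepr d0 hd0dvd).2
  have hexps : ∀ d : ℕ, high d = t → ∀ i : Fin f, ¬ (i : ℕ) < v →
      d.factorization (p i) = d0.factorization (p i) := by
    intro d hdt i hiv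
    have h1 : high d = high d0 := by rw [hdt, hd0t]
    rw [hhigh_pow, hhigh_pow] at h1
    have h2 := congrArg (fun m => m.factorization (p i)) h1
    simp only [fact_eval hp hinj] at h2
    rwa [if_neg hiv, if_neg hiv] at h2
  set Ψ : (∀ i : Fin f, Fin (if (i : ℕ) < v then e i + 1 else 1)) → ℕ :=
    fun a => t * ∏ i, p i ^ (a i : ℕ) with hΨ
  have hzero : ∀ (a : ∀ i : Fin f, Fin (if (i : ℕ) < v then e i + 1 else 1)) (i : Fin f),
      ¬ (i : ℕ) < v → (a i : ℕ) = 0 := by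
    intro a i hiv
    have h := (a i).isLt
    have h2 : (if (i : ℕ) < v then e i + 1 else 1) = 1 := if_neg hiv
    omega
  have htprod : t = ∏ i : Fin f,
      if (i : ℕ) < v then 1 else p i ^ d0.factorization (p i) := hd0t.symm
  have hΨrepr : ∀ a, Ψ a = ∏ i : Fin f,
      p i ^ (if (i : ℕ) < v then (a i : ℕ) else d0.factorization (p i)) := by
    intro a
    show t * ∏ i, p i ^ (a i : ℕ) = _
    rw [htprod, ← Finset.prod_mul_distrib]
    apply Finset.prod_congr rfl
    intro i _
    by_cases hiv : (i : ℕ) < v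
    · simp [hiv]
    · rw [if_neg hiv, hzero a i hiv, pow_zero, mul_one]
      rw [if_neg hiv]
  have hΨdvd : ∀ a, Ψ a ∣ n := by
    intro a
    rw [hΨrepr a, hn]
    apply Finset.prod_dvd_prod_of_dvd
    intro i _
    apply pow_dvd_pow
    by_cases hiv : (i : ℕ) < v
    · rw [if_pos hiv]
      have h := (a i).isLt
      have h2 : (if (i : ℕ) < v then e i + 1 else 1) = e i + 1 := if_pos hiv
      omega
    · rw [if_neg hiv]; exact hc0e i
  have hΨhigh : ∀ a, high (Ψ a) = t := by
    intro a
    rw [htprod]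
    show ∏ i : Fin f, (if (i : ℕ) < v then 1 else p i ^ (Ψ a).factorization (p i)) = _
    apply Finset.prod_congr rfl
    intro i _
    by_cases hiv : (i : ℕ) < v
    · simp [hiv]
    · rw [if_neg hiv, if_neg hiv, hΨrepr a, fact_eval hp hinj _ i, if_neg hiv]
  have hΨinj : Function.Injective Ψ := by
    intro a b hab
    have hab' : t * ∏ i, p i ^ (a i : ℕ) = t * ∏ i, p i ^ (b i : ℕ) := hab
    have h2 : (∏ i, p i ^ (a i : ℕ)) = ∏ i, p i ^ (b i : ℕ) :=
      Nat.eq_of_mul_eq_mul_left htpos hab'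
    funext i
    have h3 := congrArg (fun m => m.factorization (p i)) h2
    simp only [fact_eval hp hinj] at h3
    exact Fin.ext h3
  have himg : n.divisors.filter (fun d => high d = t) = Finset.image Ψ Finset.univ := by
    ext d
    rw [Finset.mem_filter, Finset.mem_image, Nat.mem_divisors]
    constructor
    · rintro ⟨⟨hddvd, _⟩, hdt⟩
      refine ⟨fun i => ⟨if (i : ℕ) < v then d.factorization (p i) else 0, ?_⟩,
        Finset.mem_univ _, ?_⟩
      · split_ifs with h
        · exact Nat.lt_succ_of_le ((hrepr d hddvd).2 i)
        · exact Nat.one_pos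
      · rw [hΨrepr]
        conv_rhs => rw [(hrepr d hddvd).1]
        apply Finset.prod_congr rfl
        intro i _
        by_cases hiv : (i : ℕ) < v
        · simp [hiv]
        · rw [if_neg hiv, hexps d hdt i hiv]
    · rintro ⟨a, -, ha⟩
      rw [← ha]
      exact ⟨⟨hΨdvd a, hn0⟩, hΨhigh a⟩
  rw [himg, Finset.card_image_of_injective _ hΨinj, Finset.card_univ, Fintype.card_pi]
  apply dvd_of_eq
  apply Finset.prod_congr rfl
  intro i _
  rw [Fintype.card_fin]

/-- The `j`-th smallest divisor of `n` (1-indexed). -/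
def dth (n j : ℕ) : ℕ := ((n.divisors.sort (· ≤ ·)).getD (j - 1) 0)

theorem stmt8 (f : ℕ) (p e : Fin f → ℕ) (hp : ∀ i, (p i).Prime)
    (hmono : StrictMono p) (he : ∀ i, 1 ≤ e i)
    (n : ℕ) (hn : n = ∏ i, p i ^ e i)
    (ℓ : ℕ) (hℓ1 : 1 ≤ ℓ) (hℓ2 : ℓ ≤ n.divisors.card - 1)
    (v : ℕ) (hv1 : 1 ≤ v) (hv2 : v ≤ f)
    (hdvd : (∏ i : Fin f, if (i : ℕ) < v - 1 then e i + 1 else 1) ∣ ℓ)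
    (hndvd : ¬ (∏ i : Fin f, if (i : ℕ) < v then e i + 1 else 1) ∣ ℓ) :
    (dth n (ℓ + 1) : ℝ) / (dth n ℓ : ℝ) ≤ (p ⟨v - 1, by omega⟩ : ℝ) := by
  have hinj : Function.Injective p := hmono.injective
  have hn0 : n ≠ 0 := by
    rw [hn]; exact Finset.prod_ne_zero_iff.mpr fun i _ => pow_ne_zero _ (hp i).ne_zero
  have hlen : (n.divisors.sort (· ≤ ·)).length = n.divisors.card := Finset.length_sort _
  have hNpos : 0 < n.divisors.card := Finset.card_pos.mpr ⟨n, Nat.mem_divisors_self n hn0⟩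
  have hℓ1N : ℓ - 1 < (n.divisors.sort (· ≤ ·)).length := by omega
  have hℓN' : ℓ < (n.divisors.sort (· ≤ ·)).length := by omega
  set x := (n.divisors.sort (· ≤ ·)).get ⟨ℓ - 1, hℓ1N⟩ with hx
  set y := (n.divisors.sort (· ≤ ·)).get ⟨ℓ, hℓN'⟩ with hy
  have hdx : dth n ℓ = x := List.getD_eq_get _ 0 ⟨ℓ - 1, hℓ1N⟩
  have hdy : dth n (ℓ + 1) = y := by
    simp only [dth, Nat.add_sub_cancel]
    exact List.getD_eq_get _ 0 ⟨ℓ, hℓN'⟩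
  have hxmem : x ∈ n.divisors :=
    (Finset.mem_sort (α := ℕ) (· ≤ ·)).mp (List.get_mem _ _)
  have hxpos : 0 < x := Nat.pos_of_mem_divisors hxmem
  have hmain : y ≤ p ⟨v - 1, by omega⟩ * x := by
    by_contra hcon
    push_neg at hcon
    have hbig : ∀ d ∈ n.divisors, x < d → y ≤ d := by
      intro d hd hxd
      have h := sorted_ge_of_gt hℓ1N (k := ℓ - 1) (by omega) hd hxd
      have hix : (ℓ - 1) + 1 = ℓ := by omega
      convert h using 3
      omega
    have hScard : (n.divisors.filter (· ≤ x)).card = ℓ := by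
      have := sorted_card_le_get hℓ1N
      rw [← hx] at this
      omega
    apply hndvd
    rw [← hScard]
    exact core_lemma f p e hp hmono hinj n hn hn0 v hv1 hv2 x y hxpos hcon hbig
      (fun d hd => repr_lemma hp hinj hn hn0 hd)
  rw [hdx, hdy, div_le_iff₀ (by exact_mod_cast hxpos)]
  exact_mod_cast hmain
end

section
/- For all real $a, b$ with $ab \ne 0$ and every integer $t \ge 0$: $\sum_{j=0}^{t} \binom{t}{j} (a+j)^{j-1} (b+t-j)^{t-j-1} = \left(\frac{1}{a} + \frac{1}{b}\right)(t+a+b)^{t-1}$. -/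
open Finset Function
open scoped fwdDiff

lemma choose_aux (n k : ℕ) (hk : k ≤ n) :
    (n + 1 - k) * (n + 1).choose k = (n + 1) * n.choose k := by
  have h1 := Nat.add_one_mul_choose_eq n (n - k)
  have h3 : (n + 1).choose (n - k + 1) = (n + 1).choose k := by
    rw [show n - k + 1 = (n + 1) - k by omega, Nat.choose_symm (by omega)]
  calc (n + 1 - k) * (n + 1).choose k = (n + 1).choose (n - k + 1) * (n - k + 1) := by
        rw [h3, mul_comm]; congr 1; omega
    _ = (n + 1) * n.choose (n - k) := h1.symm
    _ = (n + 1) * n.choose k := by rw [Nat.choose_symm hk]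

lemma fwdDiff_pow_zero : ∀ n m : ℕ, m < n → (Δ_[(1:ℝ)])^[n] (fun y : ℝ => y ^ m) = fun _ => 0 := by
  intro n
  induction n with
  | zero => omega
  | succ n IH =>
    intro m hm
    rw [Function.iterate_succ_apply]
    have hδ : Δ_[(1:ℝ)] (fun y : ℝ => y ^ m)
        = ∑ i ∈ range m, (m.choose i : ℝ) • (fun y : ℝ => y ^ i) := by
      funext y
      simp only [fwdDiff, Finset.sum_apply, Pi.smul_apply, smul_eq_mul]
      rw [add_pow, Finset.sum_range_succ]
      simp [mul_comm]
    rw [hδ, fwdDiff_iter_finset_sum]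
    funext y
    simp only [Finset.sum_apply, Pi.zero_apply]
    apply Finset.sum_eq_zero
    intro i hi
    rw [fwdDiff_iter_const_smul]
    have : i < n := by have := Finset.mem_range.mp hi; omega
    rw [IH i this]
    simp

lemma alt_sum_zero (n m : ℕ) (hm : m < n) (x : ℝ) :
    ∑ k ∈ Finset.range (n + 1), (-1 : ℝ) ^ (n - k) * (n.choose k) * (x + k) ^ m = 0 := by
  have H := fwdDiff_iter_eq_sum_shift (1 : ℝ) (fun y : ℝ => y ^ m) n x
  rw [fwdDiff_pow_zero n m hm] at H
  have H2 : ∑ k ∈ Finset.range (n + 1), (-1 : ℝ) ^ (n - k) * (n.choose k) * (x + k) ^ m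
      = ∑ k ∈ Finset.range (n + 1), (((-1 : ℤ)) ^ (n - k) * (n.choose k) : ℤ) • (x + k • (1:ℝ)) ^ m := by
    apply Finset.sum_congr rfl
    intro k _
    rw [zsmul_eq_mul, nsmul_eq_mul, mul_one]
    push_cast
    ring
  rw [H2, ← H]

lemma abel1 : ∀ n : ℕ, ∀ x : ℝ, x ≠ 0 → ∀ y : ℝ,
    ∑ k ∈ Finset.range (n + 1),
        (n.choose k : ℝ) * x * (x + k) ^ ((k : ℤ) - 1) * (y + (n : ℝ) - k) ^ (n - k)
      = (x + y + n) ^ n := by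
  intro n
  induction n with
  | zero =>
    intro x hx y
    simp [mul_inv_cancel₀ hx]
  | succ n IH =>
    intro x hx y
    set c : ℕ → ℝ := fun k => (((n+1).choose k : ℕ) : ℝ) * x * (x + k) ^ ((k : ℤ) - 1) with hc
    set F : ℝ → ℝ := fun z =>
      (∑ k ∈ Finset.range (n + 2), c k * (z + (((n+1 : ℕ) : ℝ) - k)) ^ (n + 1 - k))
        - (x + z + ((n+1 : ℕ) : ℝ)) ^ (n + 1) with hFdef
    -- derivative is zero
    have hder : ∀ z : ℝ, HasDerivAt F 0 z := by
      intro z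
      have h1 : HasDerivAt
          (fun z : ℝ => ∑ k ∈ Finset.range (n + 2), c k * (z + (((n+1 : ℕ) : ℝ) - k)) ^ (n + 1 - k))
          (∑ k ∈ Finset.range (n + 2),
            c k * (((n + 1 - k : ℕ) : ℝ) * (z + (((n+1 : ℕ) : ℝ) - k)) ^ (n + 1 - k - 1))) z := by
        apply HasDerivAt.fun_sum
        intro k _
        have hbase : HasDerivAt (fun z : ℝ => (z + (((n+1 : ℕ) : ℝ) - k)) ^ (n + 1 - k))
            (((n + 1 - k : ℕ) : ℝ) * (z + (((n+1 : ℕ) : ℝ) - k)) ^ (n + 1 - k - 1) * 1) z :=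
          ((hasDerivAt_id z).add_const _).pow _
        simpa using hbase.const_mul (c k)
      have h2 : HasDerivAt (fun z : ℝ => (x + z + ((n+1 : ℕ) : ℝ)) ^ (n + 1))
          ((((n+1 : ℕ)) : ℝ) * (x + z + ((n+1 : ℕ) : ℝ)) ^ n) z := by
        have : HasDerivAt (fun z : ℝ => (x + z + ((n+1 : ℕ) : ℝ)) ^ (n + 1))
            (((n + 1 : ℕ) : ℝ) * (x + z + ((n+1 : ℕ) : ℝ)) ^ (n + 1 - 1) * 1) z :=
          (((hasDerivAt_id z).const_add x).add_const _).pow _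
        simpa using this
      have hD : ∑ k ∈ Finset.range (n + 2),
            c k * (((n + 1 - k : ℕ) : ℝ) * (z + (((n+1 : ℕ) : ℝ) - k)) ^ (n + 1 - k - 1))
          = (((n+1 : ℕ)) : ℝ) * (x + z + ((n+1 : ℕ) : ℝ)) ^ n := by
        rw [Finset.sum_range_succ]
        have hlast : c (n+1) * (((n + 1 - (n+1) : ℕ) : ℝ) * (z + (((n+1 : ℕ) : ℝ) - (n+1 : ℕ))) ^ (n + 1 - (n+1) - 1)) = 0 := by
          simp
        rw [hlast, add_zero]
        have hstep : ∀ k ∈ Finset.range (n + 1),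
            c k * (((n + 1 - k : ℕ) : ℝ) * (z + (((n+1 : ℕ) : ℝ) - k)) ^ (n + 1 - k - 1))
              = ((n+1 : ℕ) : ℝ) * ((n.choose k : ℝ) * x * (x + k) ^ ((k : ℤ) - 1)
                  * ((z + 1) + (n : ℝ) - k) ^ (n - k)) := by
          intro k hk
          have hk' : k ≤ n := Nat.lt_succ_iff.mp (Finset.mem_range.mp hk)
          have he : n + 1 - k - 1 = n - k := by omega
          have hb : z + (((n+1 : ℕ) : ℝ) - k) = (z + 1) + (n : ℝ) - k := by push_cast; ring
          have hcast : ((n + 1 - k : ℕ) : ℝ) * (((n+1).choose k : ℕ) : ℝ)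
              = ((n+1 : ℕ) : ℝ) * (n.choose k : ℝ) := by
            exact_mod_cast congrArg (Nat.cast (R := ℝ)) (choose_aux n k hk')
          rw [he, hb, hc]
          linear_combination (x * (x + (k:ℝ)) ^ ((k : ℤ) - 1) * ((z + 1) + (n : ℝ) - k) ^ (n - k)) * hcast
        rw [Finset.sum_congr rfl hstep, ← Finset.mul_sum, IH x hx (z + 1)]
        congr 1
        push_cast
        ring
      have := (h1.sub h2)
      rw [hD, sub_self] at this
      exact this
    -- value at y0
    have hF0 : F (-(x + ((n+1 : ℕ) : ℝ))) = 0 := by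
      rw [hFdef]
      simp only
      have h2 : (x + -(x + ((n+1 : ℕ) : ℝ)) + ((n+1 : ℕ) : ℝ)) = 0 := by ring
      rw [h2, zero_pow (Nat.succ_ne_zero n)]
      rw [sub_zero]
      have hstep : ∀ k ∈ Finset.range (n + 2),
          c k * (-(x + ((n+1 : ℕ) : ℝ)) + (((n+1 : ℕ) : ℝ) - k)) ^ (n + 1 - k)
            = x * ((-1 : ℝ) ^ (n + 1 - k) * ((n+1).choose k : ℝ) * (x + k) ^ n) := by
        intro k hk
        have hk2 : k ≤ n + 1 := Nat.lt_succ_iff.mp (Finset.mem_range.mp hk)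
        have hb : (-(x + ((n+1 : ℕ) : ℝ)) + (((n+1 : ℕ) : ℝ) - k)) = -(x + k) := by push_cast; ring
        rw [hb, neg_pow]
        simp only [hc]
        rcases Nat.eq_zero_or_pos k with rfl | hkpos
        · simp only [Nat.cast_zero, add_zero, Nat.sub_zero, zero_sub, zpow_neg, zpow_one]
          rw [pow_succ]
          field_simp
          ring
        · obtain ⟨j, rfl⟩ : ∃ j, k = j + 1 := ⟨k - 1, by omega⟩
          have hz : (x + ((j+1 : ℕ) : ℝ)) ^ (((j+1 : ℕ) : ℤ) - 1) = (x + ((j+1 : ℕ) : ℝ)) ^ (j : ℕ) := by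
            rw [show (((j+1 : ℕ) : ℤ) - 1) = (j : ℤ) by push_cast; ring, zpow_natCast]
          simp only [hz]
          have hp : (x + ((j+1 : ℕ) : ℝ)) ^ (j : ℕ) * (x + ((j+1 : ℕ) : ℝ)) ^ (n + 1 - (j+1))
              = (x + ((j+1 : ℕ) : ℝ)) ^ n := by
            rw [← pow_add]
            congr 1
            omega
          calc (((n+1).choose (j+1) : ℕ) : ℝ) * x * (x + ((j+1:ℕ):ℝ)) ^ (j:ℕ) * ((-1:ℝ) ^ (n+1-(j+1)) * (x + ((j+1:ℕ):ℝ)) ^ (n+1-(j+1)))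
              = ((-1:ℝ) ^ (n+1-(j+1)) * (((n+1).choose (j+1) : ℕ) : ℝ) * x) * ((x + ((j+1:ℕ):ℝ)) ^ (j:ℕ) * (x + ((j+1:ℕ):ℝ)) ^ (n+1-(j+1))) := by ring
            _ = x * ((-1:ℝ) ^ (n+1-(j+1)) * (((n+1).choose (j+1) : ℕ) : ℝ) * (x + ((j+1:ℕ):ℝ)) ^ n) := by rw [hp]; ring
      rw [Finset.sum_congr rfl hstep, ← Finset.mul_sum]
      have := alt_sum_zero (n+1) n (Nat.lt_succ_self n) x
      have hconv : ∑ k ∈ Finset.range (n + 2), (-1 : ℝ) ^ (n + 1 - k) * ((n+1).choose k : ℝ) * (x + k) ^ n = 0 := this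
      calc x * ∑ k ∈ Finset.range (n + 2), (-1 : ℝ) ^ (n + 1 - k) * ((n+1).choose k : ℝ) * (x + k) ^ n = x * 0 := by rw [hconv]
        _ = 0 := mul_zero x
    -- conclude
    have hdiff : Differentiable ℝ F := fun z => (hder z).differentiableAt
    have hzero : ∀ z, deriv F z = 0 := fun z => (hder z).deriv
    have hconst := is_const_of_deriv_eq_zero hdiff hzero y (-(x + ((n+1 : ℕ) : ℝ)))
    rw [hF0] at hconst
    have hFy : F y = 0 := hconst
    rw [hFdef] at hFy
    simp only [sub_eq_zero] at hFy
    rw [← hFy]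
    apply Finset.sum_congr rfl
    intro k hk
    simp only [hc]
    congr 2
    push_cast
    ring


theorem stmt9 (t : ℕ) (a b : ℝ) (ha : a ≠ 0) (hb : b ≠ 0)
    (htab : (t : ℝ) + a + b ≠ 0)
    (h : ∀ j : ℕ, j ≤ t → a + (j : ℝ) ≠ 0 ∧ b + (t : ℝ) - (j : ℝ) ≠ 0) :
    ∑ j ∈ Finset.range (t + 1),
        (t.choose j : ℝ) * (a + (j : ℝ)) ^ ((j : ℤ) - 1) *
          (b + (t : ℝ) - (j : ℝ)) ^ ((t : ℤ) - (j : ℤ) - 1)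
      = (1 / a + 1 / b) * ((t : ℝ) + a + b) ^ ((t : ℤ) - 1) := by
  obtain _ | s := t
  · -- t = 0
    have hab : a + b ≠ 0 := by simpa using htab
    simp only [Finset.sum_range_one, Nat.choose_self, Nat.cast_one, Nat.cast_zero, one_mul,
      add_zero, sub_zero, zero_sub, zpow_neg, zpow_one, zpow_zero, Nat.cast_ofNat, zero_add]
    field_simp
    simp only [neg_zero, zero_sub, zpow_neg, zpow_one]
    field_simp
    ring
  · -- t = s + 1
    set P : ℝ := ((s+1 : ℕ) : ℝ) + a + b with hP
    have hPne : P ≠ 0 := htab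
    set T : ℝ := ∑ j ∈ Finset.range (s + 1 + 1),
        ((s+1).choose j : ℝ) * (a + (j : ℝ)) ^ ((j : ℤ) - 1) *
          (b + ((s+1 : ℕ) : ℝ) - (j : ℝ)) ^ (((s+1 : ℕ) : ℤ) - (j : ℤ) - 1) with hT
    have habel := abel1 (s+1) a ha b
    -- split each term of habel
    have hsplit : ∀ j ∈ Finset.range (s + 2),
        ((s+1).choose j : ℝ) * a * (a + j) ^ ((j : ℤ) - 1) * (b + ((s+1 : ℕ) : ℝ) - j) ^ (s + 1 - j)
          = b * (a * (((s+1).choose j : ℝ) * (a + (j : ℝ)) ^ ((j : ℤ) - 1) *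
              (b + ((s+1 : ℕ) : ℝ) - (j : ℝ)) ^ (((s+1 : ℕ) : ℤ) - (j : ℤ) - 1)))
            + (((s+1 : ℕ) : ℝ) - (j : ℝ)) * (((s+1).choose j : ℝ) * a * (a + (j : ℝ)) ^ ((j : ℤ) - 1) *
              (b + ((s+1 : ℕ) : ℝ) - (j : ℝ)) ^ (((s+1 : ℕ) : ℤ) - (j : ℤ) - 1)) := by
      intro j hj
      have hj' : j ≤ s + 1 := Nat.lt_succ_iff.mp (Finset.mem_range.mp hj)
      have hB : b + ((s+1 : ℕ) : ℝ) - (j : ℝ) ≠ 0 := (h j hj').2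
      have hpow : (b + ((s+1 : ℕ) : ℝ) - (j : ℝ)) ^ (s + 1 - j)
          = (b + ((s+1 : ℕ) : ℝ) - (j : ℝ)) ^ (((s+1 : ℕ) : ℤ) - (j : ℤ) - 1) *
              (b + ((s+1 : ℕ) : ℝ) - (j : ℝ)) := by
        have h1 : ((s + 1 - j : ℕ) : ℤ) = ((s+1 : ℕ) : ℤ) - (j : ℤ) := by push_cast; omega
        rw [← zpow_natCast (b + ((s+1 : ℕ) : ℝ) - (j : ℝ)) (s + 1 - j), h1,
          zpow_sub_one₀ hB (((s+1 : ℕ) : ℤ) - (j : ℤ)), mul_assoc,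
          inv_mul_cancel₀ hB, mul_one]
      rw [hpow]
      push_cast
      ring
    rw [Finset.sum_congr rfl hsplit, Finset.sum_add_distrib, ← Finset.mul_sum, ← Finset.mul_sum,
      ← hT] at habel
    -- second sum
    have hV : ∑ j ∈ Finset.range (s + 2),
        (((s+1 : ℕ) : ℝ) - (j : ℝ)) * (((s+1).choose j : ℝ) * a * (a + (j : ℝ)) ^ ((j : ℤ) - 1) *
          (b + ((s+1 : ℕ) : ℝ) - (j : ℝ)) ^ (((s+1 : ℕ) : ℤ) - (j : ℤ) - 1))
        = ((s+1 : ℕ) : ℝ) * P ^ s := by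
      rw [Finset.sum_range_succ]
      rw [sub_self, zero_mul, add_zero]
      have hstep : ∀ j ∈ Finset.range (s + 1),
          (((s+1 : ℕ) : ℝ) - (j : ℝ)) * (((s+1).choose j : ℝ) * a * (a + (j : ℝ)) ^ ((j : ℤ) - 1) *
            (b + ((s+1 : ℕ) : ℝ) - (j : ℝ)) ^ (((s+1 : ℕ) : ℤ) - (j : ℤ) - 1))
          = ((s+1 : ℕ) : ℝ) * ((s.choose j : ℝ) * a * (a + (j : ℝ)) ^ ((j : ℤ) - 1) *
              ((b + 1) + (s : ℝ) - (j : ℝ)) ^ (s - j)) := by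
        intro j hj
        have hj' : j ≤ s := Nat.lt_succ_iff.mp (Finset.mem_range.mp hj)
        have hcast : ((s + 1 - j : ℕ) : ℝ) * (((s+1).choose j : ℕ) : ℝ)
            = ((s+1 : ℕ) : ℝ) * (s.choose j : ℝ) := by
          exact_mod_cast congrArg (Nat.cast (R := ℝ)) (choose_aux s j hj')
        have hsub : ((s+1 : ℕ) : ℝ) - (j : ℝ) = ((s + 1 - j : ℕ) : ℝ) := by
          rw [Nat.cast_sub (by omega : j ≤ s + 1)]
        have hexp : (((s+1 : ℕ) : ℤ) - (j : ℤ) - 1) = ((s - j : ℕ) : ℤ) := by push_cast; omega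
        have hbase : b + ((s+1 : ℕ) : ℝ) - (j : ℝ) = (b + 1) + (s : ℝ) - (j : ℝ) := by
          push_cast; ring
        rw [hexp, zpow_natCast, hsub, hbase]
        linear_combination (a * (a + (j : ℝ)) ^ ((j : ℤ) - 1) *
          ((b + 1) + (s : ℝ) - (j : ℝ)) ^ (s - j)) * hcast
      rw [Finset.sum_congr rfl hstep, ← Finset.mul_sum, abel1 s a ha (b + 1)]
      have hbase2 : a + (b + 1) + (s : ℝ) = P := by rw [hP]; push_cast; ring
      rw [hbase2]
    rw [hV] at habel
    -- now habel : b * (a * T) + (s+1) * P^s = (a + b + ↑(s+1))^(s+1)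
    have hRHS : (a + b + ((s+1 : ℕ) : ℝ)) ^ (s + 1) = P ^ s * P := by
      rw [show a + b + ((s+1 : ℕ) : ℝ) = P from by rw [hP]; ring, pow_succ]
    rw [hRHS] at habel
    have habT : a * b * T = (a + b) * P ^ s := by
      have : b * (a * T) = P ^ s * P - ((s+1 : ℕ) : ℝ) * P ^ s := by linarith
      calc a * b * T = b * (a * T) := by ring
        _ = P ^ s * P - ((s+1 : ℕ) : ℝ) * P ^ s := this
        _ = (a + b) * P ^ s := by rw [hP]; ring
    -- conclude
    have hzp : (((s+1 : ℕ) : ℝ) + a + b) ^ (((s+1 : ℕ) : ℤ) - 1) = P ^ s := by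
      have : (((s+1 : ℕ) : ℤ) - 1) = ((s : ℕ) : ℤ) := by push_cast; ring
      rw [this, zpow_natCast, hP]
    rw [hzp]
    have hab : a * b ≠ 0 := mul_ne_zero ha hb
    have h2 : (1 / a + 1 / b) * P ^ s = (a * b * T) / (a * b) := by
      rw [habT, eq_div_iff hab]
      field_simp
      ring
    rw [h2, mul_div_cancel_left₀ T hab]
end

section
/- Let $0 < \varepsilon \le 1$, let $t \ge 10$ be an integer, and let $a, b$ be real numbers with $a + b > -(1-\varepsilon)t$, $a > 1-t$, $b > 1-t$. Then $\sum_{1 \le j \le t-1,\ -a < j < b+t} \binom{t}{j} (a+j)^{j-1} (b+t-j)^{t-j-1} \le e^{5 + 1/\varepsilon} (t+a+b)^{t-1}$. -/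
open Real Filter Nat

lemma sqrt_pi_le_stirlingSeq (n : ℕ) (hn : 1 ≤ n) : Real.sqrt π ≤ Stirling.stirlingSeq n := by
  obtain ⟨m, rfl⟩ := Nat.exists_eq_add_of_le hn
  have h1 : Filter.Tendsto (Stirling.stirlingSeq ∘ Nat.succ) atTop (nhds (Real.sqrt π)) := by
    exact (Filter.tendsto_add_atTop_iff_nat 1).mpr Stirling.tendsto_stirlingSeq_sqrt_pi
  have := Stirling.stirlingSeq'_antitone.le_of_tendsto h1 m
  simpa [Function.comp, Nat.succ_eq_add_one, Nat.add_comm] using this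

lemma stirling_lower (n : ℕ) (hn : 1 ≤ n) :
    Real.sqrt n * ((n : ℝ) / Real.exp 1) ^ n ≤ (n ! : ℝ) := by
  have h := sqrt_pi_le_stirlingSeq n hn
  rw [Stirling.stirlingSeq] at h
  have hn0 : (0:ℝ) < n := by exact_mod_cast hn
  have hd : 0 < Real.sqrt (2 * n) * ((n : ℝ) / Real.exp 1) ^ n := by positivity
  rw [le_div_iff₀ hd] at h
  calc Real.sqrt n * ((n : ℝ) / Real.exp 1) ^ n
      ≤ Real.sqrt π * (Real.sqrt (2 * n) * ((n : ℝ) / Real.exp 1) ^ n) := by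
        have h2 : Real.sqrt n ≤ Real.sqrt π * Real.sqrt (2*n) := by
          rw [← Real.sqrt_mul (by positivity)]
          apply Real.sqrt_le_sqrt
          nlinarith [Real.pi_gt_three]
        nlinarith [pow_pos (by positivity : (0:ℝ) < (n : ℝ) / Real.exp 1) n,
          Real.sqrt_nonneg (n:ℝ)]
    _ ≤ (n ! : ℝ) := h

lemma stirling_upper (n : ℕ) (hn : 1 ≤ n) :
    (n ! : ℝ) ≤ Real.exp 1 * Real.sqrt n * ((n : ℝ) / Real.exp 1) ^ n := by
  obtain ⟨m, rfl⟩ := Nat.exists_eq_add_of_le hn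
  have h := Stirling.stirlingSeq'_antitone (Nat.zero_le m)
  simp only [Function.comp] at h
  rw [Stirling.stirlingSeq_one, Stirling.stirlingSeq] at h
  have hnn : Nat.succ m = 1 + m := by omega
  rw [hnn] at h
  set n := 1 + m with hn'
  have hn0 : (0:ℝ) < n := by positivity
  have hd : 0 < Real.sqrt (2 * n) * ((n : ℝ) / Real.exp 1) ^ n := by positivity
  rw [div_le_iff₀ hd] at h
  calc (n ! : ℝ) ≤ Real.exp 1 / Real.sqrt 2 * (Real.sqrt (2 * n) * ((n : ℝ) / Real.exp 1) ^ n) := h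
    _ = Real.exp 1 * Real.sqrt n * ((n : ℝ) / Real.exp 1) ^ n := by
        rw [Real.sqrt_mul (by norm_num)]
        have h2 : (0:ℝ) < Real.sqrt 2 := by positivity
        field_simp

lemma choose_bound (t j k : ℕ) (h1 : 1 ≤ j) (hk : 1 ≤ k) (hjk : j + k = t) :
    (t.choose j : ℝ) * (Real.sqrt j * (j:ℝ)^j) * (Real.sqrt k * (k:ℝ)^k)
      ≤ Real.exp 1 * Real.sqrt t * (t:ℝ)^t := by
  have hjt : j ≤ t := by omega
  have hfact : (t.choose j : ℝ) * (j ! : ℝ) * (k ! : ℝ) = (t ! : ℝ) := by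
    have := Nat.choose_mul_factorial_mul_factorial hjt
    have hk' : t - j = k := by omega
    rw [hk'] at this
    exact_mod_cast congrArg (Nat.cast : ℕ → ℝ) this
  have hC : (0:ℝ) ≤ (t.choose j : ℝ) := by positivity
  have key : (t.choose j : ℝ) * (Real.sqrt j * ((j:ℝ)/Real.exp 1)^j) *
      (Real.sqrt k * ((k:ℝ)/Real.exp 1)^k) ≤ Real.exp 1 * Real.sqrt t * ((t:ℝ)/Real.exp 1)^t := by
    calc (t.choose j : ℝ) * (Real.sqrt j * ((j:ℝ)/Real.exp 1)^j) *
        (Real.sqrt k * ((k:ℝ)/Real.exp 1)^k)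
        ≤ (t.choose j : ℝ) * (j ! : ℝ) * (k ! : ℝ) := by
          have l1 := stirling_lower j h1
          have l2 := stirling_lower k hk
          have p2 : (0:ℝ) ≤ Real.sqrt k * ((k:ℝ)/Real.exp 1)^k := by positivity
          exact mul_le_mul (mul_le_mul_of_nonneg_left l1 hC) l2 p2 (by positivity)
      _ = (t ! : ℝ) := hfact
      _ ≤ _ := stirling_upper t (by omega)
  have hE : (0:ℝ) < Real.exp 1 := Real.exp_pos 1
  have hEj : Real.exp 1 ^ j * Real.exp 1 ^ k = Real.exp 1 ^ t := by rw [← pow_add, hjk]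
  rw [div_pow, div_pow, div_pow] at key
  have h2 := mul_le_mul_of_nonneg_right key (le_of_lt (pow_pos hE t))
  calc (t.choose j : ℝ) * (Real.sqrt j * (j:ℝ)^j) * (Real.sqrt k * (k:ℝ)^k)
      = (t.choose j : ℝ) * (Real.sqrt j * ((j:ℝ)^j / Real.exp 1 ^ j)) *
          (Real.sqrt k * ((k:ℝ)^k / Real.exp 1 ^ k)) * Real.exp 1 ^ t := by
        rw [← hEj]; field_simp; try ring
    _ ≤ Real.exp 1 * Real.sqrt t * ((t:ℝ)^t / Real.exp 1 ^ t) * Real.exp 1 ^ t := h2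
    _ = Real.exp 1 * Real.sqrt t * (t:ℝ)^t := by field_simp

lemma amgm (u v : ℝ) (hu : 0 ≤ u) (hv : 0 ≤ v) (p q : ℕ) (hpq : 0 < p + q) :
    u ^ p * v ^ q ≤ (((p:ℝ) * u + (q:ℝ) * v) / ((p:ℝ) + (q:ℝ))) ^ (p + q) := by
  have hn : (0:ℝ) < (p:ℝ) + (q:ℝ) := by exact_mod_cast hpq
  set w₁ : ℝ := (p:ℝ)/((p:ℝ)+(q:ℝ)) with hw₁
  set w₂ : ℝ := (q:ℝ)/((p:ℝ)+(q:ℝ)) with hw₂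
  have h := Real.geom_mean_le_arith_mean2_weighted (by positivity : (0:ℝ) ≤ w₁)
    (by positivity : (0:ℝ) ≤ w₂) hu hv (by rw [hw₁, hw₂]; field_simp)
  have h2 := pow_le_pow_left₀ (by positivity) h (p + q)
  have hL : (u ^ w₁ * v ^ w₂) ^ (p + q) = u ^ p * v ^ q := by
    rw [mul_pow, ← Real.rpow_natCast (u ^ w₁) (p+q), ← Real.rpow_natCast (v ^ w₂) (p+q),
      ← Real.rpow_mul hu, ← Real.rpow_mul hv]
    have e1 : w₁ * ((p+q : ℕ):ℝ) = (p:ℝ) := by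
      rw [hw₁]; push_cast; all_goals field_simp
    have e2 : w₂ * ((p+q : ℕ):ℝ) = (q:ℝ) := by
      rw [hw₂]; push_cast; all_goals field_simp
    rw [e1, e2, Real.rpow_natCast, Real.rpow_natCast]
  have hR : (w₁ * u + w₂ * v) ^ (p + q) = (((p:ℝ) * u + (q:ℝ) * v) / ((p:ℝ) + (q:ℝ))) ^ (p+q) := by
    congr 1; rw [hw₁, hw₂]; field_simp; all_goals ring
  rw [hL, hR] at h2
  exact h2

lemma g_tele : ∀ N : ℕ, 1 ≤ N →
    ∑ j ∈ Finset.Icc 2 N, 1/((j:ℝ) * Real.sqrt j) ≤ 2 - 2/Real.sqrt N := by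
  intro N hN
  induction N, hN using Nat.le_induction with
  | base => simp
  | succ N hN ih =>
    rw [Finset.sum_Icc_succ_top (by omega : 2 ≤ N + 1)]
    set σ := Real.sqrt N with hσd
    set τ := Real.sqrt ((N:ℝ)+1) with hτd
    have hσ : (0:ℝ) < σ := Real.sqrt_pos.mpr (by exact_mod_cast hN)
    have hτ : (0:ℝ) < τ := Real.sqrt_pos.mpr (by positivity)
    have hσ2 : σ ^ 2 = (N:ℝ) := Real.sq_sqrt (by positivity)
    have hτ2 : τ ^ 2 = (N:ℝ)+1 := Real.sq_sqrt (by positivity)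
    have hNτ : (N:ℝ) = τ^2 - 1 := by linarith
    have hst : σ^2 = τ^2 - 1 := by linarith
    have hA : (N:ℝ)*τ^2 = τ^4 - τ^2 := by rw [hNτ]; ring
    have hB : (N:ℝ)*(σ*τ) = σ*τ^3 - σ*τ := by rw [hNτ]; ring
    have hst2 : σ^2*τ^2 = τ^4 - τ^2 := by rw [hst]; ring
    have step : 1/(((N:ℝ)+1) * τ) ≤ 2/σ - 2/τ := by
      rw [div_sub_div _ _ (ne_of_gt hσ) (ne_of_gt hτ),
        div_le_div_iff₀ (by positivity) (by positivity)]
      nlinarith [sq_nonneg (σ - τ), sq_nonneg ((σ - τ)*τ), hst, hst2, hA, hB,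
        mul_pos hσ hτ]
    push_cast
    linarith [ih, step]

lemma g_tele' (N : ℕ) : ∑ j ∈ Finset.Icc 2 N, 1/((j:ℝ) * Real.sqrt j) ≤ 2 := by
  rcases Nat.eq_zero_or_pos N with h | h
  · subst h; simp
  · have := g_tele N h
    have h2 : (0:ℝ) ≤ 2/Real.sqrt N := by positivity
    linarith

lemma gsum (t : ℕ) (ht : 10 ≤ t) :
    ∑ j ∈ Finset.Icc 1 (t-1), 1/((j:ℝ) * Real.sqrt j) ≤ 3 := by
  have hsplit : Finset.Icc 1 (t-1) = insert 1 (Finset.Icc 2 (t-1)) := by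
    ext m; simp only [Finset.mem_Icc, Finset.mem_insert]; omega
  rw [hsplit, Finset.sum_insert (by simp)]
  have : 1/((1:ℕ):ℝ) / Real.sqrt ((1:ℕ):ℝ) = 1 := by norm_num
  have h1 : 1/(((1:ℕ):ℝ) * Real.sqrt ((1:ℕ):ℝ)) = 1 := by norm_num
  rw [h1]
  linarith [g_tele' (t-1)]

lemma mono_h (u v : ℝ) (hu : 0 ≤ u) (huv : u ≤ v) : u * Real.sqrt u ≤ v * Real.sqrt v :=
  mul_le_mul huv (Real.sqrt_le_sqrt huv) (Real.sqrt_nonneg u) (by linarith)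

lemma half_bound (t : ℕ) (m : ℝ) (hm : (t:ℝ)/2 ≤ m) (ht : 10 ≤ t) :
    1 / (m * Real.sqrt m) ≤ 2 * Real.sqrt 2 / ((t:ℝ) * Real.sqrt t) := by
  have hT : (10:ℝ) ≤ (t:ℝ) := by exact_mod_cast ht
  have hhalf : (0:ℝ) < (t:ℝ)/2 := by linarith
  have hm0 : (0:ℝ) < m := lt_of_lt_of_le hhalf hm
  have key : ((t:ℝ)/2) * Real.sqrt ((t:ℝ)/2) ≤ m * Real.sqrt m := mono_h _ _ hhalf.le hm
  have heq : ((t:ℝ)/2) * Real.sqrt ((t:ℝ)/2) = (t:ℝ) * Real.sqrt t / (2 * Real.sqrt 2) := by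
    rw [Real.sqrt_div (by positivity) 2]
    have h2 : (0:ℝ) < Real.sqrt 2 := by positivity
    field_simp
    all_goals ring
  have key2 : (t:ℝ) * Real.sqrt t / (2 * Real.sqrt 2) ≤ m * Real.sqrt m := by rw [← heq]; exact key
  calc 1 / (m * Real.sqrt m) ≤ 1 / ((t:ℝ) * Real.sqrt t / (2 * Real.sqrt 2)) :=
        one_div_le_one_div_of_le (by positivity) key2
    _ = 2 * Real.sqrt 2 / ((t:ℝ) * Real.sqrt t) := by
        rw [one_div_div]

lemma wsum (t : ℕ) (ht : 10 ≤ t) :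
    ∑ j ∈ Finset.Icc 1 (t-1),
      (1 / (((j:ℝ) * Real.sqrt j) * (((t-j:ℕ):ℝ) * Real.sqrt ((t-j:ℕ):ℝ))))
      ≤ 12 * Real.sqrt 2 / ((t:ℝ) * Real.sqrt t) := by
  have hT : (10:ℝ) ≤ (t:ℝ) := by exact_mod_cast ht
  set c : ℝ := 2 * Real.sqrt 2 / ((t:ℝ) * Real.sqrt t) with hcd
  have hc : 0 ≤ c := by positivity
  have hper : ∀ j ∈ Finset.Icc 1 (t-1),
      1 / (((j:ℝ) * Real.sqrt j) * (((t-j:ℕ):ℝ) * Real.sqrt ((t-j:ℕ):ℝ))) ≤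
        c * (1/((j:ℝ) * Real.sqrt j) + 1/(((t-j:ℕ):ℝ) * Real.sqrt ((t-j:ℕ):ℝ))) := by
    intro j hj
    rw [Finset.mem_Icc] at hj
    obtain ⟨hj1, hj2⟩ := hj
    have hJ : (0:ℝ) < (j:ℝ) := by exact_mod_cast hj1
    have hK : (0:ℝ) < ((t-j:ℕ):ℝ) := by
      have : 1 ≤ t - j := by omega
      exact_mod_cast this
    have hgj : (0:ℝ) ≤ 1/((j:ℝ) * Real.sqrt j) := by positivity
    have hgk : (0:ℝ) ≤ 1/(((t-j:ℕ):ℝ) * Real.sqrt ((t-j:ℕ):ℝ)) := by positivity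
    have hsplit : 1 / (((j:ℝ) * Real.sqrt j) * (((t-j:ℕ):ℝ) * Real.sqrt ((t-j:ℕ):ℝ)))
        = (1/((j:ℝ) * Real.sqrt j)) * (1/(((t-j:ℕ):ℝ) * Real.sqrt ((t-j:ℕ):ℝ))) := by
      rw [one_div, mul_inv, ← one_div, ← one_div]
    rcases le_or_gt (2*j) t with hcase | hcase
    · have hKhalf : (t:ℝ)/2 ≤ ((t-j:ℕ):ℝ) := by
        have h1 : ((t-j:ℕ):ℝ) = (t:ℝ) - (j:ℝ) := by
          push_cast [Nat.cast_sub (show j ≤ t by omega)]; ring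
        have h2 : 2*(j:ℝ) ≤ (t:ℝ) := by exact_mod_cast hcase
        rw [h1]; linarith
      have hb := half_bound t _ hKhalf ht
      rw [hsplit]
      calc (1/((j:ℝ) * Real.sqrt j)) * (1/(((t-j:ℕ):ℝ) * Real.sqrt ((t-j:ℕ):ℝ)))
          ≤ (1/((j:ℝ) * Real.sqrt j)) * c := mul_le_mul_of_nonneg_left hb hgj
        _ ≤ c * (1/((j:ℝ) * Real.sqrt j) + 1/(((t-j:ℕ):ℝ) * Real.sqrt ((t-j:ℕ):ℝ))) := by
            nlinarith [mul_nonneg hc hgk]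
    · have hJhalf : (t:ℝ)/2 ≤ (j:ℝ) := by
        have h2 : (t:ℝ) < 2*(j:ℝ) := by exact_mod_cast hcase
        linarith
      have hb := half_bound t _ hJhalf ht
      rw [hsplit]
      calc (1/((j:ℝ) * Real.sqrt j)) * (1/(((t-j:ℕ):ℝ) * Real.sqrt ((t-j:ℕ):ℝ)))
          ≤ c * (1/(((t-j:ℕ):ℝ) * Real.sqrt ((t-j:ℕ):ℝ))) := mul_le_mul_of_nonneg_right hb hgk
        _ ≤ c * (1/((j:ℝ) * Real.sqrt j) + 1/(((t-j:ℕ):ℝ) * Real.sqrt ((t-j:ℕ):ℝ))) := by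
            nlinarith [mul_nonneg hc hgj]
  have hrefl : ∑ j ∈ Finset.Icc 1 (t-1), 1/(((t-j:ℕ):ℝ) * Real.sqrt ((t-j:ℕ):ℝ))
      = ∑ j ∈ Finset.Icc 1 (t-1), 1/((j:ℝ) * Real.sqrt j) := by
    apply Finset.sum_nbij' (i := fun m => t - m) (j := fun m => t - m)
    · intro a ha; rw [Finset.mem_Icc] at *; omega
    · intro a ha; rw [Finset.mem_Icc] at *; omega
    · intro a ha; rw [Finset.mem_Icc] at ha; omega
    · intro a ha; rw [Finset.mem_Icc] at ha; omega
    · intro a ha; rfl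
  calc ∑ j ∈ Finset.Icc 1 (t-1),
        (1 / (((j:ℝ) * Real.sqrt j) * (((t-j:ℕ):ℝ) * Real.sqrt ((t-j:ℕ):ℝ))))
      ≤ ∑ j ∈ Finset.Icc 1 (t-1),
        c * (1/((j:ℝ) * Real.sqrt j) + 1/(((t-j:ℕ):ℝ) * Real.sqrt ((t-j:ℕ):ℝ))) :=
        Finset.sum_le_sum hper
    _ = c * ((∑ j ∈ Finset.Icc 1 (t-1), 1/((j:ℝ) * Real.sqrt j)) +
        (∑ j ∈ Finset.Icc 1 (t-1), 1/(((t-j:ℕ):ℝ) * Real.sqrt ((t-j:ℕ):ℝ)))) := by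
        rw [← Finset.mul_sum, ← Finset.sum_add_distrib]
    _ = c * ((∑ j ∈ Finset.Icc 1 (t-1), 1/((j:ℝ) * Real.sqrt j)) +
        (∑ j ∈ Finset.Icc 1 (t-1), 1/((j:ℝ) * Real.sqrt j))) := by rw [hrefl]
    _ ≤ c * (3 + 3) := by
        have := gsum t ht
        apply mul_le_mul_of_nonneg_left _ hc
        linarith
    _ = 12 * Real.sqrt 2 / ((t:ℝ) * Real.sqrt t) := by
        rw [hcd]; ring

lemma term_bound (t j : ℕ) (ht : 10 ≤ t) (h1 : 1 ≤ j) (h2 : j ≤ t - 1)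
    (x y : ℝ) (hx : 0 < x) (hy : 0 < y) :
    (t.choose j : ℝ) * x ^ (j-1) * y ^ (t-j-1) ≤
      Real.exp 1 ^ 3 * Real.sqrt t * (t:ℝ)^2 * (x+y)^(t-2) *
        (1 / (((j:ℝ) * Real.sqrt j) * (((t-j:ℕ):ℝ) * Real.sqrt ((t-j:ℕ):ℝ)))) := by
  set k : ℕ := t - j with hkd
  set p : ℕ := j - 1 with hpd
  set q : ℕ := t - j - 1 with hqd
  have hk : 1 ≤ k := by omega
  have hjk : j + k = t := by omega
  have hn : p + q = t - 2 := by omega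
  set E := Real.exp 1 with hEd
  have hE : (0:ℝ) < E := Real.exp_pos 1
  set J := (j:ℝ) with hJd
  set K := (k:ℝ) with hKd
  set T := (t:ℝ) with hTd
  have hJ : (0:ℝ) < J := by rw [hJd]; exact_mod_cast h1
  have hK : (0:ℝ) < K := by rw [hKd]; exact_mod_cast hk
  have hT : (10:ℝ) ≤ T := by rw [hTd]; exact_mod_cast ht
  have hT0 : (0:ℝ) < T := by linarith
  have hJK : J + K = T := by rw [hJd, hKd, hTd]; exact_mod_cast hjk
  have hpJ : (p:ℝ) = J - 1 := by rw [hpd, hJd]; push_cast [Nat.cast_sub h1]; ring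
  have hqK : (q:ℝ) = K - 1 := by
    rw [hqd, hKd, hkd]
    push_cast [Nat.cast_sub (show 1 ≤ t - j by omega), Nat.cast_sub (show j ≤ t by omega)]
    ring
  have hnT : ((t-2:ℕ):ℝ) = T - 2 := by
    rw [hTd]; push_cast [Nat.cast_sub (show 2 ≤ t by omega)]; ring
  have hT2 : (0:ℝ) < T - 2 := by linarith
  have hS : (0:ℝ) < x + y := by linarith
  -- Step 1: AM-GM
  have A1 : x ^ p * y ^ q ≤ J^p * K^q * ((x+y)/(T-2))^(t-2) := by
    have base := amgm (x/J) (y/K) (by positivity) (by positivity) p q (by omega)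
    have hin : ((p:ℝ) * (x/J) + (q:ℝ) * (y/K)) / ((p:ℝ) + (q:ℝ)) ≤ (x+y)/(T-2) := by
      have e1 : (p:ℝ) * (x/J) ≤ x := by
        calc (p:ℝ) * (x/J) = ((p:ℝ)/J)*x := by ring
          _ ≤ 1*x := by
              apply mul_le_mul_of_nonneg_right _ hx.le
              rw [div_le_one hJ, hpJ]; linarith
          _ = x := one_mul x
      have e2 : (q:ℝ) * (y/K) ≤ y := by
        calc (q:ℝ) * (y/K) = ((q:ℝ)/K)*y := by ring
          _ ≤ 1*y := by
              apply mul_le_mul_of_nonneg_right _ hy.le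
              rw [div_le_one hK, hqK]; linarith
          _ = y := one_mul y
      have hden : (p:ℝ) + (q:ℝ) = T - 2 := by rw [hpJ, hqK]; linarith
      rw [hden]
      exact div_le_div₀ (by positivity) (by linarith) hT2 le_rfl
    have base2 : (x/J)^p * (y/K)^q ≤ ((x+y)/(T-2))^(t-2) := by
      rw [← hn]
      calc (x/J)^p * (y/K)^q ≤ (((p:ℝ)*(x/J) + (q:ℝ)*(y/K))/((p:ℝ)+(q:ℝ)))^(p+q) := base
        _ ≤ ((x+y)/(T-2))^(p+q) := by
            apply pow_le_pow_left₀ (by positivity) hin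
    calc x ^ p * y ^ q = J^p * K^q * ((x/J)^p * (y/K)^q) := by
          rw [div_pow, div_pow]; field_simp
      _ ≤ J^p * K^q * ((x+y)/(T-2))^(t-2) := by
          apply mul_le_mul_of_nonneg_left base2 (by positivity)
  -- Step 2: choose bound, rearranged
  have A2 : (t.choose j : ℝ) ≤ E * Real.sqrt T * T^t /
      ((Real.sqrt J * J^j) * (Real.sqrt K * K^k)) := by
    rw [le_div_iff₀ (by positivity)]
    calc (t.choose j : ℝ) * (Real.sqrt J * J^j * (Real.sqrt K * K^k))
        = (t.choose j : ℝ) * (Real.sqrt J * J^j) * (Real.sqrt K * K^k) := by ring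
      _ ≤ E * Real.sqrt T * T^t := choose_bound t j k h1 hk hjk
  -- exponent splittings
  have hjp : J^j = J^p * J := by
    rw [hpd, ← pow_succ]; congr 1; omega
  have hkq : K^k = K^q * K := by
    rw [hqd, ← pow_succ]; congr 1; omega
  -- Step 3: T^t ≤ E^2 * T^2 * (T-2)^(t-2)
  have A3 : T^t ≤ E^2 * T^2 * (T-2)^(t-2) := by
    have e1 : T/(T-2) ≤ Real.exp (2/(T-2)) := by
      have h := Real.add_one_le_exp (2/(T-2))
      have : T/(T-2) = 2/(T-2) + 1 := by field_simp; ring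
      rw [this]; exact h
    have e2 : (T/(T-2))^(t-2) ≤ E^2 := by
      calc (T/(T-2))^(t-2) ≤ Real.exp (2/(T-2)) ^ (t-2) := by
            apply pow_le_pow_left₀ (by positivity) e1
        _ = Real.exp (((t-2:ℕ):ℝ) * (2/(T-2))) := by rw [← Real.exp_nat_mul]
        _ = Real.exp 2 := by rw [hnT]; congr 1; field_simp
        _ = E^2 := by rw [hEd, ← Real.exp_nat_mul]; norm_num
    have e3 : T^t = T^2 * (T/(T-2))^(t-2) * (T-2)^(t-2) := by
      rw [div_pow]
      field_simp
      rw [← pow_add]; congr 1; omega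
    rw [e3]
    calc T^2 * (T/(T-2))^(t-2) * (T-2)^(t-2) ≤ T^2 * E^2 * (T-2)^(t-2) := by
          apply mul_le_mul_of_nonneg_right (mul_le_mul_of_nonneg_left e2 (by positivity))
            (by positivity)
      _ = E^2 * T^2 * (T-2)^(t-2) := by ring
  -- Combine
  have hC : (0:ℝ) ≤ (t.choose j : ℝ) := by positivity
  calc (t.choose j : ℝ) * x ^ p * y ^ q
      = (t.choose j : ℝ) * (x ^ p * y ^ q) := by ring
    _ ≤ (t.choose j : ℝ) * (J^p * K^q * ((x+y)/(T-2))^(t-2)) :=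
        mul_le_mul_of_nonneg_left A1 hC
    _ ≤ (E * Real.sqrt T * T^t / ((Real.sqrt J * J^j) * (Real.sqrt K * K^k))) *
          (J^p * K^q * ((x+y)/(T-2))^(t-2)) := by
        apply mul_le_mul_of_nonneg_right A2 (by positivity)
    _ = (T^t/(T-2)^(t-2)) * (E * Real.sqrt T * (x+y)^(t-2) *
          (1 / ((J * Real.sqrt J) * (K * Real.sqrt K)))) := by
        rw [hjp, hkq, div_pow]
        field_simp
    _ ≤ (E^2*T^2) * (E * Real.sqrt T * (x+y)^(t-2) *
          (1 / ((J * Real.sqrt J) * (K * Real.sqrt K)))) := by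
        apply mul_le_mul_of_nonneg_right _ (by positivity)
        rw [div_le_iff₀ (by positivity)]
        calc T^t ≤ E^2 * T^2 * (T-2)^(t-2) := A3
          _ = E^2*T^2*(T-2)^(t-2) := by ring
    _ = E ^ 3 * Real.sqrt T * T^2 * (x+y)^(t-2) *
          (1 / ((J * Real.sqrt J) * (K * Real.sqrt K))) := by ring


open scoped Classical

theorem stmt10 (ε : ℝ) (hε0 : 0 < ε) (hε1 : ε ≤ 1) (t : ℕ) (ht : 10 ≤ t)
    (a b : ℝ) (hab : -(1 - ε) * (t : ℝ) < a + b)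
    (ha : 1 - (t : ℝ) < a) (hb : 1 - (t : ℝ) < b) :
    ∑ j ∈ (Finset.Icc 1 (t - 1)).filter
        (fun j : ℕ => -a < (j : ℝ) ∧ (j : ℝ) < b + (t : ℝ)),
        (t.choose j : ℝ) * (a + (j : ℝ)) ^ ((j : ℝ) - 1) *
          (b + (t : ℝ) - (j : ℝ)) ^ ((t : ℝ) - (j : ℝ) - 1)
      ≤ Real.exp (5 + 1 / ε) * ((t : ℝ) + a + b) ^ ((t : ℝ) - 1) := by
  have hT : (10:ℝ) ≤ (t:ℝ) := by exact_mod_cast ht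
  set E := Real.exp 1 with hEd
  have hE : (0:ℝ) < E := Real.exp_pos 1
  set s : ℝ := (t:ℝ) + a + b with hsd
  have hεT : ε * (t:ℝ) < s := by
    have h' : ε * (t:ℝ) = (t:ℝ) - (1-ε)*(t:ℝ) := by ring
    rw [hsd, h']; linarith
  have hs0 : (0:ℝ) < s := by nlinarith
  set B : ℕ → ℝ := fun j => E^3 * Real.sqrt t * (t:ℝ)^2 * s^(t-2) *
    (1 / (((j:ℝ) * Real.sqrt j) * (((t-j:ℕ):ℝ) * Real.sqrt ((t-j:ℕ):ℝ)))) with hBd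
  have hstep1 : ∑ j ∈ (Finset.Icc 1 (t - 1)).filter
        (fun j : ℕ => -a < (j : ℝ) ∧ (j : ℝ) < b + (t : ℝ)),
        (t.choose j : ℝ) * (a + (j : ℝ)) ^ ((j : ℝ) - 1) *
          (b + (t : ℝ) - (j : ℝ)) ^ ((t : ℝ) - (j : ℝ) - 1)
      ≤ ∑ j ∈ (Finset.Icc 1 (t - 1)).filter
        (fun j : ℕ => -a < (j : ℝ) ∧ (j : ℝ) < b + (t : ℝ)), B j := by
    apply Finset.sum_le_sum
    intro j hj
    simp only [Finset.mem_filter, Finset.mem_Icc] at hj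
    obtain ⟨⟨hj1, hj2⟩, hja, hjb⟩ := hj
    have hjt : j + 1 ≤ t := by omega
    have hx : (0:ℝ) < a + (j:ℝ) := by linarith
    have hy : (0:ℝ) < b + (t:ℝ) - (j:ℝ) := by linarith
    have e1 : (a + (j:ℝ)) ^ ((j:ℝ) - 1) = (a + (j:ℝ)) ^ ((j-1 : ℕ)) := by
      rw [show (j:ℝ) - 1 = ((j-1:ℕ):ℝ) from by push_cast [Nat.cast_sub hj1]; ring,
        Real.rpow_natCast]
    have e2 : (b + (t:ℝ) - (j:ℝ)) ^ ((t:ℝ) - (j:ℝ) - 1) = (b + (t:ℝ) - (j:ℝ)) ^ ((t-j-1 : ℕ)) := by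
      rw [show (t:ℝ) - (j:ℝ) - 1 = ((t-j-1:ℕ):ℝ) from by
        push_cast [Nat.cast_sub (show 1 ≤ t - j by omega), Nat.cast_sub (show j ≤ t by omega)]
        ring, Real.rpow_natCast]
    rw [e1, e2]
    have tb := term_bound t j ht hj1 (by omega : j ≤ t - 1) (a + (j:ℝ)) (b + (t:ℝ) - (j:ℝ)) hx hy
    have hxy : a + (j:ℝ) + (b + (t:ℝ) - (j:ℝ)) = s := by rw [hsd]; ring
    rw [hxy] at tb
    exact tb
  have hstep2 : ∑ j ∈ (Finset.Icc 1 (t - 1)).filter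
        (fun j : ℕ => -a < (j : ℝ) ∧ (j : ℝ) < b + (t : ℝ)), B j
      ≤ ∑ j ∈ Finset.Icc 1 (t-1), B j := by
    apply Finset.sum_le_sum_of_subset_of_nonneg (Finset.filter_subset _ _)
    intro j _ _
    rw [hBd]
    positivity
  have hstep3 : ∑ j ∈ Finset.Icc 1 (t-1), B j ≤
      E^3 * Real.sqrt t * (t:ℝ)^2 * s^(t-2) * (12 * Real.sqrt 2 / ((t:ℝ) * Real.sqrt t)) := by
    rw [hBd, ← Finset.mul_sum]
    apply mul_le_mul_of_nonneg_left (wsum t ht) (by positivity)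
  have hstep4 : E^3 * Real.sqrt t * (t:ℝ)^2 * s^(t-2) * (12 * Real.sqrt 2 / ((t:ℝ) * Real.sqrt t))
      = 12 * Real.sqrt 2 * E^3 * (t:ℝ) * s^(t-2) := by
    have h1 : (0:ℝ) < Real.sqrt t := Real.sqrt_pos.mpr (by linarith)
    have h2 : (0:ℝ) < (t:ℝ) := by linarith
    field_simp
  -- numeric facts
  have hsqrt2 : Real.sqrt 2 ≤ 1.5 := by
    rw [show (1.5:ℝ) = Real.sqrt (1.5^2) from (Real.sqrt_sq (by norm_num)).symm]
    apply Real.sqrt_le_sqrt; norm_num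
  have h12 : 12 * Real.sqrt 2 ≤ E^3 := by
    rw [hEd]
    have hE27 : (2.7:ℝ) ≤ Real.exp 1 := by nlinarith [Real.exp_one_gt_d9]
    have hE3 : (2.7:ℝ)^3 ≤ (Real.exp 1)^3 := by
      apply pow_le_pow_left₀ (by norm_num) hE27
    nlinarith [hE3]
  have hEε : E ≤ ε * Real.exp (1/ε) := by
    have h := Real.add_one_le_exp (1/ε - 1)
    rw [Real.exp_sub] at h
    have h2 : 1/ε ≤ Real.exp (1/ε) / Real.exp 1 := by linarith
    rw [le_div_iff₀ (Real.exp_pos 1)] at h2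
    rw [show E = ε*((1/ε)*Real.exp 1) from by rw [hEd]; field_simp]
    exact mul_le_mul_of_nonneg_left h2 hε0.le
  have hexp5 : E^5 * Real.exp (1/ε) = Real.exp (5 + 1/ε) := by
    rw [Real.exp_add, hEd]
    congr 1
    rw [← Real.exp_nat_mul]
    norm_num
  have c1 : 12*Real.sqrt 2*E^3 ≤ E^6 := by
    calc 12*Real.sqrt 2*E^3 ≤ E^3*E^3 := by
          apply mul_le_mul_of_nonneg_right h12 (by positivity)
      _ = E^6 := by ring
  have c2 : E^6*(t:ℝ) ≤ Real.exp (5 + 1/ε) * s := by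
    calc E^6*(t:ℝ) = E^5 * (E*(t:ℝ)) := by ring
      _ ≤ E^5 * ((ε * Real.exp (1/ε))*(t:ℝ)) := by
          apply mul_le_mul_of_nonneg_left (mul_le_mul_of_nonneg_right hEε (by linarith))
            (by positivity)
      _ = (E^5 * Real.exp (1/ε)) * (ε*(t:ℝ)) := by ring
      _ ≤ (E^5 * Real.exp (1/ε)) * s := by
          apply mul_le_mul_of_nonneg_left (le_of_lt hεT) (by positivity)
      _ = Real.exp (5 + 1/ε) * s := by rw [hexp5]
  have hfin : 12 * Real.sqrt 2 * E^3 * (t:ℝ) * s^(t-2) ≤ Real.exp (5 + 1/ε) * s^(t-1) := by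
    calc 12 * Real.sqrt 2 * E^3 * (t:ℝ) * s^(t-2)
        = (12 * Real.sqrt 2 * E^3) * ((t:ℝ) * s^(t-2)) := by ring
      _ ≤ E^6 * ((t:ℝ) * s^(t-2)) := by
          apply mul_le_mul_of_nonneg_right c1 (by positivity)
      _ = (E^6 * (t:ℝ)) * s^(t-2) := by ring
      _ ≤ (Real.exp (5 + 1/ε) * s) * s^(t-2) := by
          apply mul_le_mul_of_nonneg_right c2 (by positivity)
      _ = Real.exp (5 + 1/ε) * s^(t-1) := by
          rw [show t-1 = (t-2)+1 from by omega, pow_succ]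
          ring
  have hrpow : s ^ ((t:ℝ) - 1) = s^(t-1) := by
    rw [show (t:ℝ) - 1 = ((t-1:ℕ):ℝ) from by
      push_cast [Nat.cast_sub (show 1 ≤ t by omega)]; ring, Real.rpow_natCast]
  rw [hrpow]
  calc ∑ j ∈ (Finset.Icc 1 (t - 1)).filter
        (fun j : ℕ => -a < (j : ℝ) ∧ (j : ℝ) < b + (t : ℝ)),
        (t.choose j : ℝ) * (a + (j : ℝ)) ^ ((j : ℝ) - 1) *
          (b + (t : ℝ) - (j : ℝ)) ^ ((t : ℝ) - (j : ℝ) - 1)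
      ≤ ∑ j ∈ Finset.Icc 1 (t-1), B j := le_trans hstep1 hstep2
    _ ≤ E^3 * Real.sqrt t * (t:ℝ)^2 * s^(t-2) * (12 * Real.sqrt 2 / ((t:ℝ) * Real.sqrt t)) :=
        hstep3
    _ = 12 * Real.sqrt 2 * E^3 * (t:ℝ) * s^(t-2) := hstep4
    _ ≤ Real.exp (5 + 1/ε) * s^(t-1) := hfin
end

section
/- Let $X_1, \ldots, X_k$ be independent uniform random variables on $[0,1]$ with order statistics $\xi_1 \le \cdots \le \xi_k$. For $1 \le u \le k$, the probability that $\xi_i \ge \frac{i-u}{k+1-u}$ for all $1 \le i \le k$ is at least $\frac{u - 1/2}{k + 1/2}$. -/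
open MeasureTheory Set Pointwise

noncomputable def Sset (n : ℕ) (u v : ℝ) : Set (Fin n → ℝ) :=
  {ξ | (∀ i j : Fin n, i ≤ j → ξ i ≤ ξ j) ∧ (∀ i : Fin n, 0 ≤ ξ i ∧ ξ i ≤ 1) ∧
       (∀ i : Fin n, ((i : ℕ) + 1 - u) / v ≤ ξ i)}

lemma Sset_meas (n : ℕ) (u v : ℝ) : MeasurableSet (Sset n u v) := by
  unfold Sset
  simp only [setOf_and]
  refine (MeasurableSet.inter ?_ (MeasurableSet.inter ?_ ?_))
  · rw [show {ξ : Fin n → ℝ | ∀ i j : Fin n, i ≤ j → ξ i ≤ ξ j}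
        = ⋂ (i) (j), {ξ : Fin n → ℝ | i ≤ j → ξ i ≤ ξ j} by ext; simp]
    refine MeasurableSet.iInter fun i => MeasurableSet.iInter fun j => ?_
    by_cases h : i ≤ j
    · simp only [h, true_implies]
      exact measurableSet_le (measurable_pi_apply i) (measurable_pi_apply j)
    · simp only [h, false_implies, setOf_true]
      exact MeasurableSet.univ
  · rw [show {ξ : Fin n → ℝ | ∀ i : Fin n, 0 ≤ ξ i ∧ ξ i ≤ 1}
        = ⋂ i, ({ξ : Fin n → ℝ | 0 ≤ ξ i} ∩ {ξ | ξ i ≤ 1}) by ext; simp [forall_and]]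
    exact MeasurableSet.iInter fun i => (measurableSet_le measurable_const (measurable_pi_apply i)).inter
      (measurableSet_le (measurable_pi_apply i) measurable_const)
  · rw [show {ξ : Fin n → ℝ | ∀ i : Fin n, ((i : ℕ) + 1 - u) / v ≤ ξ i}
        = ⋂ i : Fin n, {ξ : Fin n → ℝ | ((i : ℕ) + 1 - u) / v ≤ ξ i} by ext; simp]
    exact MeasurableSet.iInter fun i =>
      measurableSet_le measurable_const (measurable_pi_apply i)

lemma Sset_vol_le_one (n : ℕ) (u v : ℝ) : volume (Sset n u v) ≤ 1 := by
  have h : Sset n u v ⊆ univ.pi (fun _ : Fin n => Icc (0:ℝ) 1) := by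
    intro ξ hξ
    simp only [mem_pi, mem_univ, true_implies, mem_Icc]
    exact fun i => hξ.2.1 i
  calc volume (Sset n u v) ≤ volume (univ.pi (fun _ : Fin n => Icc (0:ℝ) 1)) := measure_mono h
    _ = 1 := by
      rw [volume_pi_pi]
      simp [Real.volume_Icc]

-- scaling: image of affine map
lemma vol_affine_image (n : ℕ) (x : ℝ) (hx : 0 ≤ 1 - x) (B : Set (Fin n → ℝ)) :
    volume ((fun η : Fin n → ℝ => fun i => x + (1 - x) * η i) '' B)
      = ENNReal.ofReal ((1 - x) ^ n) * volume B := by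
  have himg : (fun η : Fin n → ℝ => fun i => x + (1 - x) * η i) '' B
      = (fun _ : Fin n => x) +ᵥ ((1 - x) • B) := by
    rw [← Set.image_vadd, ← Set.image_smul, Set.image_image]
    rfl
  rw [himg, measure_vadd, Measure.addHaar_smul_of_nonneg volume hx]
  congr 2
  rw [Module.finrank_fintype_fun_eq_card, Fintype.card_fin]
lemma cons_mem (n : ℕ) (u v x : ℝ) (hv : 0 < v) (hx1 : x < 1)
    (hx0 : 0 ≤ x) (hxa : (1 - u)/v ≤ x) (η : Fin n → ℝ)
    (hη : η ∈ Sset n (u - 1 + v*x) (v*(1-x))) :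
    Fin.cons x (fun i => x + (1-x)*η i) ∈ Sset (n+1) u v := by
  obtain ⟨hmono, hbdd, hcon⟩ := hη
  have h1x : (0:ℝ) < 1 - x := by linarith
  refine ⟨?_, ?_, ?_⟩
  · intro i j hij
    rcases Fin.eq_zero_or_eq_succ i with rfl | ⟨i', rfl⟩ <;>
      rcases Fin.eq_zero_or_eq_succ j with rfl | ⟨j', rfl⟩
    · exact le_refl _
    · simp only [Fin.cons_zero, Fin.cons_succ]
      nlinarith [(hbdd j').1]
    · exact absurd hij (by simp [Fin.le_def])
    · simp only [Fin.cons_succ]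
      have : i' ≤ j' := by rwa [Fin.succ_le_succ_iff] at hij
      nlinarith [hmono i' j' this]
  · intro i
    rcases Fin.eq_zero_or_eq_succ i with rfl | ⟨i', rfl⟩
    · simp only [Fin.cons_zero]
      exact ⟨hx0, hx1.le⟩
    · simp only [Fin.cons_succ]
      constructor
      · nlinarith [(hbdd i').1]
      · nlinarith [(hbdd i').2]
  · intro i
    rcases Fin.eq_zero_or_eq_succ i with rfl | ⟨i', rfl⟩
    · simp only [Fin.cons_zero, Fin.val_zero]
      calc ((0:ℕ) + 1 - u)/v = (1-u)/v := by norm_num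
        _ ≤ x := hxa
    · simp only [Fin.cons_succ, Fin.val_succ]
      have hkey := hcon i'
      have hne : v * (1-x) ≠ 0 := by positivity
      have heq : (((i':ℕ) : ℝ) + 1 - (u - 1 + v*x)) / (v*(1-x)) * (1-x)
          = (((i':ℕ) : ℝ) + 2 - u - v*x)/v := by
        field_simp
        ring
      have h2 : (((i':ℕ) : ℝ) + 2 - u - v*x)/v ≤ (1-x) * η i' := by
        rw [← heq]
        calc _ = (1-x) * ((((i':ℕ) : ℝ) + 1 - (u - 1 + v*x)) / (v*(1-x))) := by ring
          _ ≤ (1-x) * η i' := by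
            exact mul_le_mul_of_nonneg_left hkey h1x.le
      have h3 : (((i':ℕ) : ℝ) + 1 + 1 - u)/v = x + (((i':ℕ) : ℝ) + 2 - u - v*x)/v := by
        field_simp
        ring
      push_cast
      rw [h3]
      linarith
lemma vol_sections {n : ℕ} {S : Set (Fin (n+1) → ℝ)} (hS : MeasurableSet S) :
    volume S = ∫⁻ x : ℝ, volume {η : Fin n → ℝ | Fin.cons x η ∈ S} := by
  have hmp := MeasureTheory.volume_preserving_piFinSuccAbove (fun _ : Fin (n+1) => ℝ) 0
  set e := MeasurableEquiv.piFinSuccAbove (fun _ : Fin (n+1) => ℝ) 0 with he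
  have himg : MeasurableSet (e '' S) := e.measurableSet_image.2 hS
  have h1 : volume S = volume (e '' S) := by
    rw [← hmp.measure_preimage himg.nullMeasurableSet]
    congr 1
    exact (Equiv.preimage_image e.toEquiv S).symm
  rw [h1, show (volume : Measure (ℝ × (Fin n → ℝ))) = (volume : Measure ℝ).prod volume from rfl,
    Measure.prod_apply himg]
  congr 1
  ext x
  congr 1
  ext η
  simp only [mem_preimage, mem_setOf_eq]
  constructor
  · rintro ⟨w, hw, hew⟩
    have : w = Fin.cons x η := by
      have h2 := congrArg e.symm hew
      simp only [MeasurableEquiv.symm_apply_apply] at h2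
      rw [h2]
      simp [he, MeasurableEquiv.piFinSuccAbove, Fin.consEquiv]
    rwa [this] at hw
  · intro h
    refine ⟨Fin.cons x η, h, ?_⟩
    simp [he, MeasurableEquiv.piFinSuccAbove, Fin.consEquiv]

lemma Sset_vol_ne_top (n : ℕ) (u v : ℝ) : volume (Sset n u v) ≠ ⊤ :=
  fun h => by simpa [h] using Sset_vol_le_one n u v

lemma main_ind : ∀ (n : ℕ) (u v : ℝ), 0 < v → u + v = (n:ℝ) + 1 →
    1 - v / ((n:ℝ)+1) ≤ (n.factorial : ℝ) * (volume (Sset n u v)).toReal := by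
  intro n
  induction n with
  | zero =>
    intro u v hv huv
    have hset : Sset 0 u v = univ :=
      eq_univ_of_forall fun ξ => ⟨fun i => i.elim0, fun i => i.elim0, fun i => i.elim0⟩
    have hvol : volume (Sset 0 u v) = 1 := by
      rw [hset, show (univ : Set (Fin 0 → ℝ)) = univ.pi (fun _ : Fin 0 => Icc (0:ℝ) 1) by
        ext; simp, volume_pi_pi]
      simp
    rw [hvol]
    simp only [Nat.factorial_zero, Nat.cast_zero, Nat.cast_one, ENNReal.toReal_one]
    norm_num
    linarith
  | succ n IH =>
    intro u v hv huv
    have hnv : u + v = (n:ℝ) + 2 := by push_cast at huv ⊢; linarith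
    set a : ℝ := max 0 ((1-u)/v) with ha_def
    have ha0 : 0 ≤ a := le_max_left _ _
    have ha1 : a < 1 := by
      rw [ha_def, max_lt_iff]
      constructor
      · norm_num
      · rw [div_lt_one hv]; linarith
    have hva : v * (1-a) ≤ (n:ℝ) + 1 := by
      rcases le_or_gt ((1-u)/v) 0 with h | h
      · have : a = 0 := by rw [ha_def, max_eq_left h]
        rw [this]
        have : 1 - u ≤ 0 := by
          by_contra hc
          push_neg at hc
          nlinarith [div_pos hc hv]
        linarith
      · have : a = (1-u)/v := by rw [ha_def, max_eq_right h.le]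
        rw [this]
        field_simp
        linarith
    -- the lower-bound integrand
    set g : ℝ → ℝ := fun x => (1-x)^n * ((1 - v*(1-x)/((n:ℝ)+1)) / n.factorial) with hg_def
    have hg_nonneg : ∀ x ∈ Ioo a 1, 0 ≤ g x := by
      intro x hx
      obtain ⟨hxa, hx1⟩ := hx
      have h1x : (0:ℝ) < 1 - x := by linarith
      have hvx : v * (1-x) ≤ (n:ℝ)+1 := by nlinarith
      have : 0 ≤ 1 - v*(1-x)/((n:ℝ)+1) := by
        rw [sub_nonneg, div_le_one (by positivity)]
        exact hvx
      positivity
    -- step 1 : measure lower bound by integral of sections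
    have step1 : ∫⁻ x in Ioo a 1, ENNReal.ofReal (g x) ≤ volume (Sset (n+1) u v) := by
      rw [vol_sections (Sset_meas (n+1) u v)]
      refine le_trans ?_ (setLIntegral_le_lintegral (Ioo a 1) _)
      refine lintegral_mono_ae ((ae_restrict_iff' measurableSet_Ioo).2 (ae_of_all _ ?_))
      intro x hx
      obtain ⟨hxa, hx1⟩ := hx
      have hxa' : (1-u)/v ≤ x := le_of_lt (lt_of_le_of_lt (le_max_right 0 _) hxa)
      have hx0 : 0 ≤ x := le_of_lt (lt_of_le_of_lt (le_max_left 0 _) hxa)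
      have h1x : (0:ℝ) < 1 - x := by linarith
      -- child parameters
      have hv' : 0 < v * (1-x) := by positivity
      have hsum' : (u - 1 + v*x) + v*(1-x) = (n:ℝ) + 1 := by ring_nf; linarith
      have hIH := IH (u - 1 + v*x) (v*(1-x)) hv' hsum'
      -- image inclusion
      have hsub : (fun η : Fin n → ℝ => fun i => x + (1 - x) * η i) '' (Sset n (u-1+v*x) (v*(1-x)))
          ⊆ {η : Fin n → ℝ | Fin.cons x η ∈ Sset (n+1) u v} := by
        rintro _ ⟨η, hη, rfl⟩
        exact cons_mem n u v x hv hx1 hx0 hxa' η hη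
      have himg := vol_affine_image n x h1x.le (Sset n (u-1+v*x) (v*(1-x)))
      have hle1 : ENNReal.ofReal ((1-x)^n) * volume (Sset n (u-1+v*x) (v*(1-x)))
          ≤ volume {η : Fin n → ℝ | Fin.cons x η ∈ Sset (n+1) u v} := by
        rw [← himg]
        exact measure_mono hsub
      refine le_trans ?_ hle1
      -- IH gives lower bound on the child volume
      have hchild : ENNReal.ofReal ((1 - v*(1-x)/((n:ℝ)+1)) / n.factorial)
          ≤ volume (Sset n (u-1+v*x) (v*(1-x))) := by
        have hfac : (0:ℝ) < n.factorial := by positivity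
        have h1 : (1 - v*(1-x)/((n:ℝ)+1)) / n.factorial
            ≤ (volume (Sset n (u-1+v*x) (v*(1-x)))).toReal := by
          rw [div_le_iff₀ hfac]
          linarith [hIH]
        calc ENNReal.ofReal ((1 - v*(1-x)/((n:ℝ)+1)) / n.factorial)
            ≤ ENNReal.ofReal ((volume (Sset n (u-1+v*x) (v*(1-x)))).toReal) :=
              ENNReal.ofReal_le_ofReal h1
          _ = volume (Sset n (u-1+v*x) (v*(1-x))) :=
              ENNReal.ofReal_toReal (Sset_vol_ne_top _ _ _)
      calc ENNReal.ofReal (g x)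
          = ENNReal.ofReal ((1-x)^n) * ENNReal.ofReal ((1 - v*(1-x)/((n:ℝ)+1)) / n.factorial) := by
            rw [hg_def, ← ENNReal.ofReal_mul (by positivity)]
        _ ≤ ENNReal.ofReal ((1-x)^n) * volume (Sset n (u-1+v*x) (v*(1-x))) := by
            exact mul_le_mul_right hchild _
    -- step 2 : evaluate the integral
    have hgcont : Continuous g := by
      rw [hg_def]
      fun_prop
    have hgint : IntegrableOn g (Ioo a 1) := by
      exact (hgcont.continuousOn.integrableOn_compact isCompact_Icc).mono_set Ioo_subset_Icc_self
    have step2 : ENNReal.ofReal ((1 - v/((n:ℝ)+2)) / (n+1).factorial)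
        ≤ ∫⁻ x in Ioo a 1, ENNReal.ofReal (g x) := by
      rw [← ofReal_integral_eq_lintegral_ofReal hgint
        ((ae_restrict_iff' measurableSet_Ioo).2 (ae_of_all _ hg_nonneg))]
      apply ENNReal.ofReal_le_ofReal
      -- compute the integral
      have hint_eq : ∫ x in Ioo a 1, g x = ∫ x in a..1, g x := by
        rw [intervalIntegral.integral_of_le ha1.le, integral_Ioc_eq_integral_Ioo]
      rw [hint_eq]
      have hsplit : ∀ x : ℝ, g x = ((1-x)^n - (v/((n:ℝ)+1)) * (1-x)^(n+1)) / n.factorial := by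
        intro x
        rw [hg_def]
        have : ((n:ℝ)+1) ≠ 0 := by positivity
        field_simp
        ring
      rw [show (fun x => g x) = fun x => ((1-x)^n - (v/((n:ℝ)+1)) * (1-x)^(n+1)) / n.factorial by
        funext x; exact hsplit x]
      have hcs : (∫ x in a..(1:ℝ), ((1-x)^n - (v/((n:ℝ)+1)) * (1-x)^(n+1)) / n.factorial)
          = ∫ t in (1-1:ℝ)..(1-a), (t^n - (v/((n:ℝ)+1)) * t^(n+1)) / n.factorial :=
        intervalIntegral.integral_comp_sub_left
          (fun t : ℝ => (t^n - (v/((n:ℝ)+1)) * t^(n+1)) / n.factorial) 1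
      rw [hcs]
      norm_num
      set b : ℝ := 1 - a with hb_def
      have hb0 : 0 < b := by simp only [hb_def]; linarith
      have hb1 : b ≤ 1 := by simp only [hb_def]; linarith
      have hvb : v * b ≤ (n:ℝ) + 1 := by simpa [hb_def] using hva
      -- key inequality
      have h1 : ((n:ℝ) + 2 - v) ≤ b^(n+1) * (((n:ℝ)+2) - v*b) := by
        rcases le_or_gt v ((n:ℝ)+1) with hcase | hcase
        · have hab : a = 0 := by
            rw [ha_def, max_eq_left]
            apply div_nonpos_of_nonpos_of_nonneg _ hv.le
            linarith
          have hb11 : b = 1 := by rw [hb_def, hab]; ring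
          rw [hb11, one_pow, mul_one]
          linarith
        · have hu1 : u < 1 := by linarith
          have hab : a = (1-u)/v := by
            rw [ha_def, max_eq_right]
            have : 0 < (1-u)/v := div_pos (by linarith) hv
            exact this.le
          have hbv : b = ((n:ℝ)+1)/v := by
            rw [hb_def, hab]
            field_simp
            linarith
          have hvb' : v * b = (n:ℝ)+1 := by
            rw [hbv]
            field_simp
          have hbern : 1 + ((n:ℝ)+2) * (b - 1) ≤ b^(n+2) := by
            have := one_add_mul_le_pow (a := b - 1) (by linarith) (n+2)
            push_cast at this
            simpa using this
          have hkey : (n:ℝ) + 2 - v ≤ b^(n+1) := by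
            have h2 : b * ((n:ℝ) + 2 - v) ≤ b * b^(n+1) := by
              have hid : b * b^(n+1) = b^(n+2) := by ring
              rw [hid]
              nlinarith [hbern, hvb']
            exact le_of_mul_le_mul_left h2 hb0
          have hmul : (1:ℝ) ≤ ((n:ℝ)+2) - v*b := by rw [hvb']; ring_nf; linarith
          have hPpos : (0:ℝ) < b^(n+1) := pow_pos hb0 _
          calc ((n:ℝ) + 2 - v) ≤ b^(n+1) := hkey
            _ = b^(n+1) * 1 := by ring
            _ ≤ b^(n+1) * (((n:ℝ)+2) - v*b) := by
                exact mul_le_mul_of_nonneg_left hmul hPpos.le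
      -- final algebra
      have hfac : (0:ℝ) < n.factorial := by positivity
      have hfs : ((n+1).factorial : ℝ) = ((n:ℝ)+1) * n.factorial := by
        rw [Nat.factorial_succ]
        push_cast
        ring
      have hPpos : (0:ℝ) < b^(n+1) := pow_pos hb0 _
      have hN1 : (0:ℝ) < (n:ℝ)+1 := by positivity
      have hN2 : (0:ℝ) < (n:ℝ)+2 := by positivity
      rw [hfs, div_le_div_iff₀ (by positivity) hfac]
      have hexp : b^(n+1+1) = b^(n+1)*b := by ring
      rw [hexp]
      have hNN : ((n:ℝ)+1+1) = (n:ℝ)+2 := by ring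
      rw [hNN]
      have h2 := mul_le_mul_of_nonneg_right h1 hfac.le
      have hexpand : (b^(n+1)/((n:ℝ)+1) - v/((n:ℝ)+1)*(b^(n+1)*b/((n:ℝ)+2))) * (((n:ℝ)+1)*(n.factorial:ℝ))
          = (b^(n+1) * (((n:ℝ)+2) - v*b) * (n.factorial:ℝ)) / ((n:ℝ)+2) := by
        field_simp
      have hlhs : (1 - v/((n:ℝ)+2)) * (n.factorial:ℝ)
          = ((↑n + 2 - v) * (n.factorial:ℝ)) / ((n:ℝ)+2) := by
        field_simp
      rw [hexpand, hlhs]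
      exact (div_le_div_iff_of_pos_right hN2).2 h2
    -- combine
    have hcomb := le_trans step2 step1
    have hcast : ((n+1:ℕ):ℝ) + 1 = (n:ℝ) + 2 := by push_cast; ring
    rw [hcast]
    rcases le_or_gt (1 - v/((n:ℝ)+2)) 0 with hsign | hsign
    · refine le_trans hsign (by positivity)
    · have h2 : (1 - v/((n:ℝ)+2)) / ((n+1).factorial : ℝ)
          ≤ (volume (Sset (n+1) u v)).toReal := by
        rw [← ENNReal.ofReal_le_iff_le_toReal (Sset_vol_ne_top _ _ _)]
        exact hcomb
      have hfac : (0:ℝ) < ((n+1).factorial : ℝ) := by positivity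
      rw [div_le_iff₀ hfac] at h2
      linarith

theorem stmt11 (k : ℕ) (hk : 1 ≤ k) (u : ℝ) (hu1 : 1 ≤ u) (hu2 : u ≤ (k : ℝ)) :
    (u - 1/2) / ((k : ℝ) + 1/2) ≤
      (k.factorial : ℝ) *
        (volume {ξ : Fin k → ℝ |
          (∀ i j : Fin k, i ≤ j → ξ i ≤ ξ j) ∧
          (∀ i : Fin k, 0 ≤ ξ i ∧ ξ i ≤ 1) ∧
          (∀ i : Fin k, ((i : ℕ) + 1 - u) / ((k : ℝ) + 1 - u) ≤ ξ i)}).toReal := by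
  have hv : (0:ℝ) < (k:ℝ) + 1 - u := by linarith
  have h := main_ind k u ((k:ℝ)+1-u) hv (by ring)
  have hset : Sset k u ((k:ℝ)+1-u) = {ξ : Fin k → ℝ |
          (∀ i j : Fin k, i ≤ j → ξ i ≤ ξ j) ∧
          (∀ i : Fin k, 0 ≤ ξ i ∧ ξ i ≤ 1) ∧
          (∀ i : Fin k, ((i : ℕ) + 1 - u) / ((k : ℝ) + 1 - u) ≤ ξ i)} := rfl
  rw [hset] at h
  have h2 : (u - 1/2) / ((k : ℝ) + 1/2) ≤ 1 - ((k:ℝ)+1-u) / ((k:ℝ)+1) := by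
    have hk1 : (0:ℝ) < (k:ℝ) + 1 := by positivity
    have hk2 : (0:ℝ) < (k:ℝ) + 1/2 := by positivity
    rw [div_le_iff₀ hk2]
    have : 1 - ((k:ℝ)+1-u) / ((k:ℝ)+1) = u / ((k:ℝ)+1) := by
      field_simp
      ring
    rw [this, div_mul_eq_mul_div, le_div_iff₀ hk1]
    nlinarith
  linarith
end
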